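/- arXiv:2002.03913 — 7 statements merged into one kernel-verified Lean document; each statement's English description precedes it below -/
import Mathlib

section
/- Let H: ℝ^n × ℝ^n → ℝ be a smooth Hamiltonian on T*ℝ^n ≅ ℝ^n × ℝ^n with coordinates (q^i, p_i), and let W: ℝ^n → ℝ be smooth with γ = dW, i.e. γ_i(q) = ∂W/∂q^i (so γ is a closed 1-form on ℝ^n). Define the Hamiltonian vector field X_H(q,p) = (∂H/∂p_i(q,p), −∂H/∂q^i(q,p)) and the projected vector field X_H^γ(q) with components (X_H^γ)^i(q) = ∂H/∂p_i(q, γ(q)). Then the following are equivalent: (1) X_H and X_H^γ are γ-related, i.e. for every q ∈ ℝ^n the derivative of the map q ↦ (q, γ(q)) applied to X_H^γ(q) equals X_H(q, γ(q)) (equivalently, Σ_j ∂γ_i/∂q^j(q) · ∂H/∂p_j(q,γ(q)) = −∂H/∂q^i(q,γ(q)) for all i); (2) d(H∘γ) = 0, i.e. the function q ↦ H(q, γ(q)) has identically vanishing derivative. -/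
/-!
Differentiating `q ↦ H (q, γ q)` along `eᵢ` gives `∂H/∂qⁱ + Σⱼ (∂γⱼ/∂qⁱ) ∂H/∂pⱼ`. Since `γ = dW`,
the Jacobian of `γ` is the Hessian of `W`, hence symmetric, so the sum is the `i`-th component
of `Dγ (X_H^γ)`. Thus `d(H ∘ γ) = 0` says exactly that `Dγ (X_H^γ) = -∂H/∂q`, which is the
second component of `γ`-relatedness; the first component `X_H^γ = ∂H/∂p` holds by definition.
-/

open Matrix

variable {E F : Type*} [NormedAddCommGroup E] [NormedSpace ℝ E]
  [NormedAddCommGroup F] [NormedSpace ℝ F]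

theorem hasFDerivAt_graph {f : E → F} {f' : E →L[ℝ] F} {q : E} (hf : HasFDerivAt f f' q) :
    HasFDerivAt (fun y => (y, f y)) ((ContinuousLinearMap.id ℝ E).prod f') q :=
  (hasFDerivAt_id q).prodMk hf

theorem fderiv_graph_apply {f : E → F} {q : E} (hf : DifferentiableAt ℝ f q) (v : E) :
    fderiv ℝ (fun y => (y, f y)) q v = (v, fderiv ℝ f q v) := by
  rw [(hasFDerivAt_graph hf.hasFDerivAt).fderiv]
  rfl

theorem fderiv_comp_graph_apply {H : E × F → ℝ} {f : E → F} {q : E}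
    (hH : DifferentiableAt ℝ H (q, f q)) (hf : DifferentiableAt ℝ f q) (v : E) :
    fderiv ℝ (fun y => H (y, f y)) q v =
      fderiv ℝ H (q, f q) (v, 0) + fderiv ℝ H (q, f q) (0, fderiv ℝ f q v) := by
  have hcomp : HasFDerivAt (fun y => H (y, f y)) _ q :=
    hH.hasFDerivAt.comp q (hasFDerivAt_graph hf.hasFDerivAt)
  rw [hcomp.fderiv, ← map_add]
  simp

variable {ι : Type*} [Fintype ι]

theorem hasFDerivAt_of_eq_fderiv_apply {W : E → ℝ} {γ : E → ι → ℝ}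
    {b : ι → E} (hγ : ∀ q i, γ q i = fderiv ℝ W q (b i)) {q : E}
    (hW : ContDiffAt ℝ 2 W q) :
    HasFDerivAt γ ((ContinuousLinearMap.pi fun i => .apply ℝ ℝ (b i)).comp
      (fderiv ℝ (fderiv ℝ W) q)) q := by
  have hW' : DifferentiableAt ℝ (fderiv ℝ W) q :=
    (hW.fderiv_right (m := 1) le_rfl).differentiableAt one_ne_zero
  let Φ : (E →L[ℝ] ℝ) →L[ℝ] ι → ℝ := .pi fun i => .apply ℝ ℝ (b i)
  rw [show γ = Φ ∘ fderiv ℝ W from funext fun q => funext (hγ q)]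
  exact Φ.hasFDerivAt.comp q hW'.hasFDerivAt

variable [DecidableEq ι]

theorem ContinuousLinearMap.apply_eq_dotProduct_single {R : Type*} [CommSemiring R]
    [TopologicalSpace R] (L : (ι → R) →L[R] R) (v : ι → R) :
    L v = v ⬝ᵥ fun i => L (Pi.single i 1) := by
  conv_lhs => rw [pi_eq_sum_univ' v, map_sum]
  simp [dotProduct]

theorem ContinuousLinearMap.eq_zero_iff_forall_single {R : Type*} [CommSemiring R]
    [TopologicalSpace R] (L : (ι → R) →L[R] R) :
    L = 0 ↔ ∀ i, L (Pi.single i 1) = 0 := by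
  refine ⟨fun h i => by simp [h], fun h => ContinuousLinearMap.ext fun v => ?_⟩
  rw [L.apply_eq_dotProduct_single]
  simp [h]

theorem dotProduct_fderiv_comm_of_eq_fderiv_apply {W : (ι → ℝ) → ℝ} {γ : (ι → ℝ) → ι → ℝ}
    (hγ : ∀ q i, γ q i = fderiv ℝ W q (Pi.single i 1)) {q : ι → ℝ}
    (hW : ContDiffAt ℝ 2 W q) (v w : ι → ℝ) :
    fderiv ℝ γ q v ⬝ᵥ w = v ⬝ᵥ fderiv ℝ γ q w := by
  rw [(hasFDerivAt_of_eq_fderiv_apply hγ hW).fderiv, dotProduct_comm]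
  simp only [ContinuousLinearMap.comp_apply, ContinuousLinearMap.coe_pi',
    ContinuousLinearMap.apply_apply]
  rw [← ContinuousLinearMap.apply_eq_dotProduct_single,
    ← ContinuousLinearMap.apply_eq_dotProduct_single]
  exact hW.isSymmSndFDerivAt (by simp) v w

theorem fderiv_comp_graph_single {H : (ι → ℝ) × (ι → ℝ) → ℝ} {W : (ι → ℝ) → ℝ}
    {γ : (ι → ℝ) → ι → ℝ} (hγ : ∀ q i, γ q i = fderiv ℝ W q (Pi.single i 1)) {q : ι → ℝ}
    (hH : DifferentiableAt ℝ H (q, γ q)) (hW : ContDiffAt ℝ 2 W q) (i : ι) :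
    fderiv ℝ (fun y => H (y, γ y)) q (Pi.single i 1) =
      fderiv ℝ H (q, γ q) (Pi.single i 1, 0) +
        fderiv ℝ γ q (fun j => fderiv ℝ H (q, γ q) (0, Pi.single j 1)) i := by
  rw [fderiv_comp_graph_apply hH (hasFDerivAt_of_eq_fderiv_apply hγ hW).differentiableAt]
  have hfiber := ((fderiv ℝ H (q, γ q)).comp (.inr ℝ _ _)).apply_eq_dotProduct_single
    (fderiv ℝ γ q (Pi.single i 1))
  simp only [ContinuousLinearMap.comp_apply, ContinuousLinearMap.inr_apply] at hfiber
  rw [hfiber, dotProduct_fderiv_comm_of_eq_fderiv_apply hγ hW, single_one_dotProduct]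

theorem hamilton_jacobi_symplectic (n : ℕ)
    (H : (Fin n → ℝ) × (Fin n → ℝ) → ℝ) (hH : ContDiff ℝ (⊤ : ℕ∞) H)
    (W : (Fin n → ℝ) → ℝ) (hW : ContDiff ℝ (⊤ : ℕ∞) W)
    (γ : (Fin n → ℝ) → Fin n → ℝ)
    (hγ : ∀ (q : Fin n → ℝ) (i : Fin n), γ q i = fderiv ℝ W q (Pi.single i 1)) :
    -- (1) `X_H` and `X_H^γ` are `γ`-related: `Tγ ∘ X_H^γ = X_H ∘ γ`
    (∀ q : Fin n → ℝ,
        fderiv ℝ (fun y : Fin n → ℝ => ((y, γ y) : (Fin n → ℝ) × (Fin n → ℝ))) q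
            (fun i => fderiv ℝ H (q, γ q) (0, Pi.single i 1)) =
          ((fun i => fderiv ℝ H (q, γ q) (0, Pi.single i 1)),
           (fun i => -fderiv ℝ H (q, γ q) (Pi.single i 1, 0)))) ↔
    -- (2) `d(H ∘ γ) = 0`
    (∀ q : Fin n → ℝ, fderiv ℝ (fun y => H (y, γ y)) q = 0) := by
  have hW2 : ContDiff ℝ 2 W := hW.of_le (WithTop.coe_le_coe.2 le_top)
  have hγd (q) : DifferentiableAt ℝ γ q :=
    (hasFDerivAt_of_eq_fderiv_apply hγ hW2.contDiffAt).differentiableAt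
  refine forall_congr' fun q => ?_
  rw [fderiv_graph_apply (hγd q), Prod.mk.injEq, ContinuousLinearMap.eq_zero_iff_forall_single]
  simp only [true_and, funext_iff,
    fderiv_comp_graph_single hγ ((hH.differentiable (by simp)) _) hW2.contDiffAt]
  exact forall_congr' fun i => by rw [eq_neg_iff_add_eq_zero, add_comm]
end

section
/- Let H: ℝ^n × ℝ^n → ℝ be a smooth Hamiltonian, W: ℝ^n → ℝ smooth with γ = dW, and suppose d(H∘γ) = 0, i.e. q ↦ H(q,γ(q)) is constant. Define X_H^γ(q) by (X_H^γ)^i(q) = ∂H/∂p_i(q,γ(q)). If c: I → ℝ^n is an integral curve of X_H^γ, i.e. ċ^i(t) = ∂H/∂p_i(c(t), γ(c(t))), then t ↦ (c(t), γ(c(t))) is an integral curve of the Hamiltonian vector field X_H, i.e. it satisfies Hamilton's equations dq^i/dt = ∂H/∂p_i and dp_i/dt = −∂H/∂q^i along the curve. -/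
/-!
Differentiating `H(q, γ(q)) = const` gives `∂H/∂qⁱ = -∑ⱼ (∂γⱼ/∂qⁱ) ∂H/∂pⱼ`, while along `c` the
chain rule gives `d/dt γᵢ(c) = ∑ⱼ (∂γᵢ/∂qʲ) ∂H/∂pⱼ`. Since `γ = dW`, its Jacobian is the Hessian
of `W`, which is symmetric, so the two sums agree: this is Hamilton's second equation.
-/

open ContinuousLinearMap

section Coordinates

variable {ι R : Type*} [Fintype ι] [DecidableEq ι] [CommSemiring R]

theorem LinearMap.apply_eq_sum_mul_apply_single (L : (ι → R) →ₗ[R] R) (w : ι → R) :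
    L w = ∑ j, w j * L (Pi.single j 1) := by
  conv_lhs => rw [pi_eq_sum_univ' w]
  simp

theorem LinearMap.apply_coeffs_eq_of_symm (A : (ι → R) →ₗ[R] ι → R)
    (hA : ∀ i j, A (Pi.single i 1) j = A (Pi.single j 1) i) (L : (ι → R) →ₗ[R] R) (i : ι) :
    A (fun j => L (Pi.single j 1)) i = L (A (Pi.single i 1)) := by
  conv_lhs => rw [pi_eq_sum_univ' fun j => L (Pi.single j 1)]
  rw [L.apply_eq_sum_mul_apply_single]
  simp [hA i, mul_comm]

end Coordinates

section Partials

variable {ι : Type*} [Fintype ι] [DecidableEq ι] {W : (ι → ℝ) → ℝ}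

theorem hasFDerivAt_partials (hW : ContDiff ℝ 2 W) (q : ι → ℝ) :
    HasFDerivAt (fun y i => fderiv ℝ W y (Pi.single i 1))
      ((pi fun i => apply ℝ ℝ (Pi.single i 1)).comp (fderiv ℝ (fderiv ℝ W) q)) q :=
  (pi fun i => apply ℝ ℝ (Pi.single i 1) : ((ι → ℝ) →L[ℝ] ℝ) →L[ℝ] ι → ℝ).hasFDerivAt.comp q
    ((hW.fderiv_right (m := 1) le_rfl).differentiable one_ne_zero q).hasFDerivAt

theorem differentiable_partials (hW : ContDiff ℝ 2 W) :
    Differentiable ℝ (fun y i => fderiv ℝ W y (Pi.single i 1)) := fun q =>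
  (hasFDerivAt_partials hW q).differentiableAt

theorem fderiv_partials_symm (hW : ContDiff ℝ 2 W) (q : ι → ℝ) (i j : ι) :
    fderiv ℝ (fun y i => fderiv ℝ W y (Pi.single i 1)) q (Pi.single i 1) j =
      fderiv ℝ (fun y i => fderiv ℝ W y (Pi.single i 1)) q (Pi.single j 1) i := by
  rw [(hasFDerivAt_partials hW q).fderiv]
  exact (hW.contDiffAt.isSymmSndFDerivAt (by simp)) _ _

end Partials

theorem fderiv_fst_eq_neg_of_fderiv_graph_eq_zero {E F G : Type*}
    [NormedAddCommGroup E] [NormedSpace ℝ E] [NormedAddCommGroup F] [NormedSpace ℝ F]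
    [NormedAddCommGroup G] [NormedSpace ℝ G]
    {H : E × F → G} {γ : E → F} {q : E} {DH : E × F →L[ℝ] G} {A : E →L[ℝ] F}
    (hH : HasFDerivAt H DH (q, γ q)) (hγ : HasFDerivAt γ A q)
    (hHJ : fderiv ℝ (fun y => H (y, γ y)) q = 0) (u : E) :
    DH (u, 0) = -DH (0, A u) := by
  have hgraph :
      HasFDerivAt (fun y => H (y, γ y)) (DH.comp ((ContinuousLinearMap.id ℝ E).prod A)) q :=
    hH.comp q ((hasFDerivAt_id q).prodMk hγ)
  have h0 : DH (u, A u) = 0 := by simpa [hHJ] using congrArg (fun L => L u) hgraph.fderiv.symm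
  rw [show (u, A u) = (u, 0) + (0, A u) by simp, map_add] at h0
  exact eq_neg_of_add_eq_zero_left h0

theorem hamilton_jacobi_lifts_integral_curves_general (n : ℕ)
    (H : (Fin n → ℝ) × (Fin n → ℝ) → ℝ) (hH : ContDiff ℝ (⊤ : ℕ∞) H)
    (W : (Fin n → ℝ) → ℝ) (hW : ContDiff ℝ (⊤ : ℕ∞) W)
    (γ : (Fin n → ℝ) → Fin n → ℝ)
    (hγ : ∀ (q : Fin n → ℝ) (i : Fin n), γ q i = fderiv ℝ W q (Pi.single i 1))
    -- `d(H ∘ γ) = 0`, i.e. `q ↦ H(q, γ(q))` is constant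
    (hHJ : ∀ q : Fin n → ℝ, fderiv ℝ (fun y => H (y, γ y)) q = 0)
    (I : Set ℝ) (c : ℝ → Fin n → ℝ)
    -- `c` is an integral curve of `X_H^γ`:  `ċⁱ(t) = (∂H/∂pᵢ)(c(t), γ(c(t)))`
    (hc : ∀ t ∈ I, HasDerivAt c
      (fun i => fderiv ℝ H (c t, γ (c t)) (0, Pi.single i 1)) t) :
    -- then `t ↦ (c(t), γ(c(t)))` solves Hamilton's equations
    ∀ t ∈ I, HasDerivAt (fun s : ℝ => ((c s, γ (c s)) : (Fin n → ℝ) × (Fin n → ℝ)))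
      ((fun i => fderiv ℝ H (c t, γ (c t)) (0, Pi.single i 1)),
       (fun i => -fderiv ℝ H (c t, γ (c t)) (Pi.single i 1, 0))) t := by
  intro t ht
  have hW₂ : ContDiff ℝ 2 W := hW.of_le (WithTop.coe_le_coe.mpr le_top)
  have hγ_eq : γ = fun q i => fderiv ℝ W q (Pi.single i 1) := funext fun q => funext (hγ q)
  have hγ_diff : HasFDerivAt γ (fderiv ℝ γ (c t)) (c t) :=
    (hγ_eq ▸ differentiable_partials hW₂ (c t)).hasFDerivAt
  have hγ_symm :
      ∀ i j, fderiv ℝ γ (c t) (Pi.single i 1) j = fderiv ℝ γ (c t) (Pi.single j 1) i :=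
    hγ_eq ▸ fderiv_partials_symm hW₂ (c t)
  set DH := fderiv ℝ H (c t, γ (c t))
  have hH_diff : HasFDerivAt H DH (c t, γ (c t)) := (hH.differentiable (by simp) _).hasFDerivAt
  refine (hc t ht).prodMk ((hγ_diff.comp_hasDerivAt t (hc t ht)).congr_deriv (funext fun i => ?_))
  rw [fderiv_fst_eq_neg_of_fderiv_graph_eq_zero hH_diff hγ_diff (hHJ _), neg_neg]
  exact LinearMap.apply_coeffs_eq_of_symm (fderiv ℝ γ (c t) : (Fin n → ℝ) →ₗ[ℝ] Fin n → ℝ) hγ_symm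
    (DH.comp (inr ℝ _ _) : (Fin n → ℝ) →ₗ[ℝ] ℝ) i

theorem hamilton_jacobi_lifts_integral_curves (n : ℕ)
    (H : (Fin n → ℝ) × (Fin n → ℝ) → ℝ) (hH : ContDiff ℝ (⊤ : ℕ∞) H)
    (W : (Fin n → ℝ) → ℝ) (hW : ContDiff ℝ (⊤ : ℕ∞) W)
    (γ : (Fin n → ℝ) → Fin n → ℝ)
    (hγ : ∀ (q : Fin n → ℝ) (i : Fin n), γ q i = fderiv ℝ W q (Pi.single i 1))
    -- `d(H ∘ γ) = 0`, i.e. `q ↦ H(q, γ(q))` is constant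
    (hHJ : ∀ q : Fin n → ℝ, fderiv ℝ (fun y => H (y, γ y)) q = 0)
    (I : Set ℝ) (hI : IsOpen I) (c : ℝ → Fin n → ℝ)
    -- `c` is an integral curve of `X_H^γ`:  `ċⁱ(t) = (∂H/∂pᵢ)(c(t), γ(c(t)))`
    (hc : ∀ t ∈ I, HasDerivAt c
      (fun i => fderiv ℝ H (c t, γ (c t)) (0, Pi.single i 1)) t) :
    -- then `t ↦ (c(t), γ(c(t)))` solves Hamilton's equations
    ∀ t ∈ I, HasDerivAt (fun s : ℝ => ((c s, γ (c s)) : (Fin n → ℝ) × (Fin n → ℝ)))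
      ((fun i => fderiv ℝ H (c t, γ (c t)) (0, Pi.single i 1)),
       (fun i => -fderiv ℝ H (c t, γ (c t)) (Pi.single i 1, 0))) t :=
  hamilton_jacobi_lifts_integral_curves_general n H hH W hW γ hγ hHJ I c hc
end

section
/- Work in the coordinate model with smooth Hamiltonian H(x^i,u^α,p^i_α), closed 1-form θ = θ_i(x)dx^i on ℝ^m, Θ_h = −H d_mx + p^i_α du^α∧(∂_i⌟d_mx), and (Ω_θ)_h = Ω_h + θ∧Θ_h. Let η^i_α(x,u) be smooth functions and σ: ℝ^m → ℝ^N smooth with ∂σ^α/∂x^i(x) = (∂H/∂p^i_α)(x, σ(x), η(x,σ(x))) for all x, i, α, and set ψ(x) = (x, σ(x), η^i_α(x,σ(x))). Then for every smooth ν-vertical vector field Z = Z^i_α ∂/∂p^i_α on J¹π*, one has ψ*(ι_Z (Ω_θ)_h) = 0. -/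
open scoped BigOperators

noncomputable section

/-- A raw `k`-cochain on `E`: a scalar function of a point and `k` tangent vectors.
Smooth differential `k`-forms are regarded as such cochains by evaluation. -/
abbrev Coch (E : Type) (k : ℕ) : Type := E → (Fin k → E) → ℝ

/-- The (componentwise) exterior derivative of a `k`-cochain:
`(dω)(x)(v₀,…,v_k) = ∑ⱼ (-1)ʲ ∂_{vⱼ}(y ↦ ω(y)(v₀,…,v̂ⱼ,…,v_k))(x)`. -/
noncomputable def extDer {E : Type} [NormedAddCommGroup E] [NormedSpace ℝ E] {k : ℕ}
    (ω : Coch E k) : Coch E (k + 1) := fun x v =>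
  ∑ j : Fin (k + 1),
    (-1 : ℝ) ^ (j : ℕ) * fderiv ℝ (fun y => ω y (v ∘ j.succAbove)) x (v j)

/-- Wedge product of a 1-cochain with a `k`-cochain:
`(θ∧ω)(x)(v₀,…,v_k) = ∑ⱼ (-1)ʲ θ(x)(vⱼ) ω(x)(v₀,…,v̂ⱼ,…,v_k)`. -/
def wedge1 {E : Type} {k : ℕ} (θ : Coch E 1) (ω : Coch E k) : Coch E (k + 1) := fun x v =>
  ∑ j : Fin (k + 1), (-1 : ℝ) ^ (j : ℕ) * θ x (fun _ => v j) * ω x (v ∘ j.succAbove)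

/-- Interior product (contraction) of a cochain with a vector field. -/
def iotaV {E : Type} {k : ℕ} (X : E → E) (ω : Coch E (k + 1)) : Coch E k := fun x v =>
  ω x (Fin.cons (X x) v)

/-- Pullback of a cochain along a (smooth) map. -/
noncomputable def pullC {E F : Type} [NormedAddCommGroup E] [NormedSpace ℝ E]
    [NormedAddCommGroup F] [NormedSpace ℝ F] {k : ℕ}
    (f : F → E) (ω : Coch E k) : Coch F k := fun x v =>
  ω (f x) fun a => fderiv ℝ f x (v a)

/-- The differential of a function, as a 1-cochain. -/
noncomputable def dFun {E : Type} [NormedAddCommGroup E] [NormedSpace ℝ E]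
    (H : E → ℝ) : Coch E 1 := fun q v => fderiv ℝ H q (v 0)

/-! ## The coordinate model of first-order Hamiltonian field theory

The base is `ℝ^m` with coordinates `xⁱ`, the configuration bundle is `E = ℝ^m × ℝ^N` with
fibre coordinates `u^α`, and the reduced multimomentum bundle is
`J¹π* = ℝ^m × ℝ^N × ℝ^{mN}` with coordinates `(xⁱ, u^α, pⁱ_α)`. -/

/-- `J¹π* = ℝ^m × ℝ^N × ℝ^{mN}` in coordinates `(xⁱ, u^α, pⁱ_α)`. -/
abbrev Jb (m N : ℕ) : Type := (Fin m → ℝ) × (Fin N → ℝ) × (Fin m → Fin N → ℝ)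

/-- The coordinate volume form `d_mx = dx¹∧⋯∧dx^m` on `J¹π*`. -/
def dmxJ (m N : ℕ) : Coch (Jb m N) m := fun _ v => Matrix.det (Matrix.of fun a b => (v b).1 a)

/-- The coordinate 1-form `du^α` on `J¹π*`. -/
def duJ (m N : ℕ) (α : Fin N) : Coch (Jb m N) 1 := fun _ v => (v 0).2.1 α

/-- The coordinate 1-form `dpⁱ_α` on `J¹π*`. -/
def dpJ (m N : ℕ) (i : Fin m) (α : Fin N) : Coch (Jb m N) 1 := fun _ v => (v 0).2.2 i α

/-- The coordinate vector `∂/∂xⁱ` on `J¹π*`. -/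
def XdirJ (m N : ℕ) (i : Fin m) : Jb m N := (Pi.single i 1, 0, 0)

/-- The coordinate vector `∂/∂u^α` on `J¹π*`. -/
def UdirJ (m N : ℕ) (α : Fin N) : Jb m N := (0, Pi.single α 1, 0)

/-- The coordinate vector `∂/∂pⁱ_α` on `J¹π*`. -/
def PdirJ (m N : ℕ) (i : Fin m) (α : Fin N) : Jb m N := (0, 0, Pi.single i (Pi.single α 1))

/-- The `m`-form `du^α ∧ (∂_i ⌟ d_mx) = -(∂_i ⌟ (du^α ∧ d_mx))` on `J¹π*`. -/
def duContr (m N : ℕ) (α : Fin N) (i : Fin m) : Coch (Jb m N) m := fun q v =>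
  -(iotaV (fun _ => XdirJ m N i) (wedge1 (duJ m N α) (dmxJ m N)) q v)

/-- The Hamiltonian `(m+1)`-form `Ω_h = dH∧d_mx − dpⁱ_α∧du^α∧(∂_i⌟d_mx)` on `J¹π*`. -/
noncomputable def OmegaH (m N : ℕ) (H : Jb m N → ℝ) : Coch (Jb m N) (m + 1) := fun q v =>
  wedge1 (dFun H) (dmxJ m N) q v -
    ∑ i : Fin m, ∑ α : Fin N, wedge1 (dpJ m N i α) (duContr m N α i) q v

/-- The `m`-form `Θ_h = −H d_mx + pⁱ_α du^α∧(∂_i⌟d_mx)` on `J¹π*`. -/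
noncomputable def ThetaHc (m N : ℕ) (H : Jb m N → ℝ) : Coch (Jb m N) m := fun q v =>
  -(H q) * dmxJ m N q v + ∑ i : Fin m, ∑ α : Fin N, q.2.2 i α * duContr m N α i q v

/-- The pullback to `J¹π*` of the 1-form `ϑ = ϑ_i(x) dxⁱ` on the base. -/
def thJ (m N : ℕ) (ϑ : (Fin m → ℝ) → Fin m → ℝ) : Coch (Jb m N) 1 := fun q v =>
  ∑ i : Fin m, ϑ q.1 i * (v 0).1 i

/-- The locally conformal Hamiltonian `(m+1)`-form `(Ω_θ)_h = Ω_h + θ∧Θ_h` on `J¹π*`. -/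
noncomputable def OmegaThH (m N : ℕ) (H : Jb m N → ℝ) (ϑ : (Fin m → ℝ) → Fin m → ℝ) :
    Coch (Jb m N) (m + 1) := fun q v =>
  OmegaH m N H q v + wedge1 (thJ m N ϑ) (ThetaHc m N H) q v

/-- The section `φ(x) = (x, φ^α(x), φⁱ_α(x))` of `J¹π* → ℝ^m`. -/
def secJ (m N : ℕ) (φ : (Fin m → ℝ) → Fin N → ℝ) (P : (Fin m → ℝ) → Fin m → Fin N → ℝ) :
    (Fin m → ℝ) → Jb m N := fun x => (x, φ x, P x)

/-- Closedness of the 1-form `ϑ_i(x) dxⁱ` on `ℝ^m`, in coordinates. -/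
def ClosedOneForm (m : ℕ) (ϑ : (Fin m → ℝ) → Fin m → ℝ) : Prop :=
  ∀ (x : Fin m → ℝ) (i j : Fin m),
    fderiv ℝ (fun y => ϑ y i) x (Pi.single j 1) = fderiv ℝ (fun y => ϑ y j) x (Pi.single i 1)

/-- The Hamilton–De Donder–Weyl equations in coordinates:
`∂φ^α/∂xⁱ = ∂H/∂pⁱ_α ∘ φ` and `∑ᵢ ∂φⁱ_α/∂xⁱ = −∂H/∂u^α ∘ φ`. -/
def HDWeq (m N : ℕ) (H : Jb m N → ℝ) (φ : (Fin m → ℝ) → Fin N → ℝ)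
    (P : (Fin m → ℝ) → Fin m → Fin N → ℝ) : Prop :=
  (∀ (x : Fin m → ℝ) (i : Fin m) (α : Fin N),
      fderiv ℝ φ x (Pi.single i 1) α = fderiv ℝ H (secJ m N φ P x) (PdirJ m N i α)) ∧
  (∀ (x : Fin m → ℝ) (α : Fin N),
      (∑ i : Fin m, fderiv ℝ P x (Pi.single i 1) i α) =
        -(fderiv ℝ H (secJ m N φ P x) (UdirJ m N α)))

/-- The locally conformal Hamilton–De Donder–Weyl equations in coordinates:
`∂φ^α/∂xⁱ = ∂H/∂pⁱ_α ∘ φ` and `∑ᵢ ∂φⁱ_α/∂xⁱ = −∂H/∂u^α ∘ φ + ϑ_i φⁱ_α`. -/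
def lcHDWeq (m N : ℕ) (H : Jb m N → ℝ) (ϑ : (Fin m → ℝ) → Fin m → ℝ)
    (φ : (Fin m → ℝ) → Fin N → ℝ) (P : (Fin m → ℝ) → Fin m → Fin N → ℝ) : Prop :=
  (∀ (x : Fin m → ℝ) (i : Fin m) (α : Fin N),
      fderiv ℝ φ x (Pi.single i 1) α = fderiv ℝ H (secJ m N φ P x) (PdirJ m N i α)) ∧
  (∀ (x : Fin m → ℝ) (α : Fin N),
      (∑ i : Fin m, fderiv ℝ P x (Pi.single i 1) i α) =
        -(fderiv ℝ H (secJ m N φ P x) (UdirJ m N α)) + ∑ i : Fin m, ϑ x i * P x i α)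

/-!
Since `Z` is `ν`-vertical and `d_mx`, `du^α ∧ (∂_i ⌟ d_mx)` and `Θ_h` all vanish as soon as one
argument is `ν`-vertical, contracting with `Z` only hits the first factor of each wedge product:
`ι_Z (Ω_θ)_h = dH(Z) d_mx − Zⁱ_α du^α ∧ (∂_i ⌟ d_mx)`, the conformal term dropping out because
`θ(Z) = 0`. The form `du^α ∧ (∂_i ⌟ d_mx)` is `d_mx` with `dxⁱ` replaced by `du^α`; along `ψ`
we have `du^α = ∂_kσ^α dx^k`, so it pulls back to `∂_iσ^α d_mx`. Hence
`ψ*(ι_Z (Ω_θ)_h) = Zⁱ_α (∂H/∂pⁱ_α − ∂_iσ^α) d_mx`, which vanishes because `σ` is an integral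
section.
-/

section VanishesOn

variable {E : Type} {k : ℕ} {S : Set E}

def VanishesOn (S : Set E) (ω : Coch E k) : Prop :=
  ∀ x (w : Fin k → E) b, w b ∈ S → ω x w = 0

theorem VanishesOn.wedge1 {θ : Coch E 1} {ω : Coch E k} (hθ : VanishesOn S θ)
    (hω : VanishesOn S ω) : VanishesOn S (wedge1 θ ω) := by
  intro x w b hb
  refine Finset.sum_eq_zero fun j _ => ?_
  rcases eq_or_ne b j with rfl | hne
  · rw [hθ x _ 0 hb, mul_zero, zero_mul]
  · obtain ⟨c, rfl⟩ := Fin.exists_succAbove_eq hne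
    rw [hω x _ c hb, mul_zero]

theorem VanishesOn.iotaV {ω : Coch E (k + 1)} (hω : VanishesOn S ω) (X : E → E) :
    VanishesOn S (iotaV X ω) :=
  fun x w b hb => hω x (Fin.cons (X x) w) b.succ (by simpa using hb)

theorem wedge1_cons_of_vanishesOn {s : E} (hs : s ∈ S) (θ : Coch E 1) {ω : Coch E k}
    (hω : VanishesOn S ω) (x : E) (w : Fin k → E) :
    wedge1 θ ω x (Fin.cons s w) = θ x (fun _ => s) * ω x w := by
  rw [wedge1, Fin.sum_univ_succ, Finset.sum_eq_zero fun j _ => ?_]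
  · simp
  · obtain ⟨c, hc⟩ := Fin.exists_succAbove_eq (Fin.succ_ne_zero j).symm
    rw [hω x _ c (by simpa [hc] using hs), mul_zero]

end VanishesOn

section Coordinates

variable {m N : ℕ}

/-- Tangent vectors to the fibres of `ν : J¹π* → E`. -/
def nuVertical (m N : ℕ) : Set (Jb m N) := {w | w.1 = 0 ∧ w.2.1 = 0}

theorem vanishesOn_dmxJ : VanishesOn (nuVertical m N) (dmxJ m N) := by
  intro q w b hb
  exact Matrix.det_eq_zero_of_column_eq_zero b fun a => by simp [hb.1]

theorem vanishesOn_duJ (α : Fin N) : VanishesOn (nuVertical m N) (duJ m N α) := by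
  intro q w b hb
  simp [duJ, Subsingleton.elim 0 b, hb.2]

theorem vanishesOn_thJ (ϑ : (Fin m → ℝ) → Fin m → ℝ) :
    VanishesOn (nuVertical m N) (thJ m N ϑ) := by
  intro q w b hb
  simp [thJ, Subsingleton.elim 0 b, hb.1]

theorem vanishesOn_duContr (α : Fin N) (i : Fin m) :
    VanishesOn (nuVertical m N) (duContr m N α i) := by
  intro q w b hb
  rw [duContr, ((vanishesOn_duJ α).wedge1 vanishesOn_dmxJ).iotaV _ q w b hb, neg_zero]

theorem vanishesOn_ThetaHc (H : Jb m N → ℝ) : VanishesOn (nuVertical m N) (ThetaHc m N H) := by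
  intro q w b hb
  simp [ThetaHc, vanishesOn_dmxJ q w b hb, vanishesOn_duContr _ _ q w b hb]

theorem OmegaThH_cons_of_mem_nuVertical (H : Jb m N → ℝ) (ϑ : (Fin m → ℝ) → Fin m → ℝ)
    {s : Jb m N} (hs : s ∈ nuVertical m N) (q : Jb m N) (w : Fin m → Jb m N) :
    OmegaThH m N H ϑ q (Fin.cons s w) =
      fderiv ℝ H q s * dmxJ m N q w - ∑ i, ∑ α, s.2.2 i α * duContr m N α i q w := by
  simp only [OmegaThH, OmegaH, wedge1_cons_of_vanishesOn hs _ vanishesOn_dmxJ,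
    wedge1_cons_of_vanishesOn hs _ (vanishesOn_duContr _ _),
    wedge1_cons_of_vanishesOn hs _ (vanishesOn_ThetaHc H), vanishesOn_thJ ϑ q (fun _ => s) 0 hs]
  simp [dFun, dpJ]

theorem dmxJ_cons_XdirJ {n : ℕ} (i : Fin (n + 1)) (q : Jb (n + 1) N) (w : Fin n → Jb (n + 1) N) :
    dmxJ (n + 1) N q (Fin.cons (XdirJ (n + 1) N i) w) =
      (-1) ^ (i : ℕ) * (Matrix.of fun r c => (w c).1 (i.succAbove r)).det := by
  rw [dmxJ, Matrix.det_succ_column_zero, Finset.sum_eq_single i]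
  · simp [XdirJ, Matrix.submatrix]
  · intro r _ hr
    simp [XdirJ, Pi.single_eq_of_ne hr]
  · simp

theorem duContr_eq_det_updateRow (α : Fin N) (i : Fin m) (q : Jb m N) (w : Fin m → Jb m N) :
    duContr m N α i q w =
      ((Matrix.of fun a b => (w b).1 a).updateRow i fun b => (w b).2.1 α).det := by
  obtain ⟨n, rfl⟩ : ∃ n, m = n + 1 := ⟨m - 1, by have := i.pos; omega⟩
  have hX : duJ (n + 1) N α q (fun _ => XdirJ (n + 1) N i) = 0 := rfl
  rw [Matrix.det_succ_row _ i, duContr, iotaV, wedge1, Fin.sum_univ_succ]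
  simp only [Fin.cons_zero, Fin.cons_succ, Fin.cons_comp_succ_succAbove, dmxJ_cons_XdirJ, hX,
    mul_zero, zero_mul, zero_add, ← Finset.sum_neg_distrib]
  refine Finset.sum_congr rfl fun a _ => ?_
  simp only [duJ, Fin.val_succ, Matrix.updateRow_self, Matrix.submatrix, Fin.removeNth,
    Matrix.updateRow_ne (Fin.succAbove_ne i _), Matrix.of_apply]
  ring

theorem duContr_eq_mul_dmxJ (α : Fin N) (i : Fin m) (q : Jb m N) (w : Fin m → Jb m N)
    (L : (Fin m → ℝ) →ₗ[ℝ] (Fin N → ℝ)) (hw : ∀ b, (w b).2.1 = L (w b).1) :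
    duContr m N α i q w = L (Pi.single i 1) α * dmxJ m N q w := by
  have hrow : (fun b => (w b).2.1 α) =
      ∑ k, L (Pi.single k 1) α • (Matrix.of fun a b => (w b).1 a) k := by
    funext b
    conv_lhs => rw [hw b, pi_eq_sum_univ' (w b).1]
    simp [mul_comm]
  rw [duContr_eq_det_updateRow, hrow, Matrix.det_updateRow_sum, dmxJ, smul_eq_mul]

theorem map_vertical_eq_sum_PdirJ (ℓ : Jb m N →ₗ[ℝ] ℝ) (z : Fin m → Fin N → ℝ) :
    ℓ (0, 0, z) = ∑ i, ∑ α, z i α * ℓ (PdirJ m N i α) := by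
  have hz : ((0, 0, z) : Jb m N) = ∑ i, ∑ α, z i α • PdirJ m N i α := by
    ext i α <;>
      simp [PdirJ, Prod.fst_sum, Prod.snd_sum, Finset.sum_apply, Pi.single_apply, ite_apply]
  simp [hz, map_sum]

theorem fderiv_secJ {φ : (Fin m → ℝ) → Fin N → ℝ} {P : (Fin m → ℝ) → Fin m → Fin N → ℝ}
    {x : Fin m → ℝ} (hφ : DifferentiableAt ℝ φ x) (hP : DifferentiableAt ℝ P x) (y : Fin m → ℝ) :
    fderiv ℝ (secJ m N φ P) x y = (y, fderiv ℝ φ x y, fderiv ℝ P x y) := by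
  have h : HasFDerivAt (secJ m N φ P)
      ((ContinuousLinearMap.id ℝ _).prod ((fderiv ℝ φ x).prod (fderiv ℝ P x))) x :=
    (hasFDerivAt_id x).prodMk (hφ.hasFDerivAt.prodMk hP.hasFDerivAt)
  rw [h.fderiv]
  rfl

end Coordinates

theorem pullback_vertical_contraction_conformal_vanishes_general (m N : ℕ)
    (H : Jb m N → ℝ)
    (ϑ : (Fin m → ℝ) → Fin m → ℝ)
    (η : (Fin m → ℝ) × (Fin N → ℝ) → Fin m → Fin N → ℝ) (hη : ContDiff ℝ (⊤ : ℕ∞) η)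
    (σ : (Fin m → ℝ) → Fin N → ℝ) (hσ : ContDiff ℝ (⊤ : ℕ∞) σ)
    (ψ : (Fin m → ℝ) → Jb m N)
    (hψ : ∀ x : Fin m → ℝ, ψ x = (x, σ x, η (x, σ x)))
    -- `σ` is an integral section: `∂σ^α/∂xⁱ = (∂H/∂pⁱ_α)(x, σ(x), η(x,σ(x)))`
    (hint : ∀ (x : Fin m → ℝ) (i : Fin m) (α : Fin N),
      fderiv ℝ σ x (Pi.single i 1) α = fderiv ℝ H (ψ x) (PdirJ m N i α)) :
    ∀ Z : Jb m N → Fin m → Fin N → ℝ, ContDiff ℝ (⊤ : ℕ∞) Z →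
      ∀ (x : Fin m → ℝ) (v : Fin m → Fin m → ℝ),
        pullC ψ (iotaV (fun q => (0, 0, Z q)) (OmegaThH m N H ϑ)) x v = 0 := by
  intro Z _ x v
  have hψ_eq : ψ = secJ m N σ fun y => η (y, σ y) := funext hψ
  have hσx : DifferentiableAt ℝ σ x := hσ.differentiable (by simp) x
  have hηx : DifferentiableAt ℝ (fun y => η (y, σ y)) x :=
    (hη.comp (contDiff_id.prodMk hσ)).differentiable (by simp) x
  set w := fun a => fderiv ℝ ψ x (v a)
  have hw : ∀ b, (w b).2.1 = fderiv ℝ σ x (w b).1 := fun b => by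
    simp only [w, hψ_eq, fderiv_secJ hσx hηx]
  have hdH := map_vertical_eq_sum_PdirJ (fderiv ℝ H (ψ x) : Jb m N →ₗ[ℝ] ℝ) (Z (ψ x))
  simp only [ContinuousLinearMap.coe_coe] at hdH
  calc pullC ψ (iotaV (fun q => (0, 0, Z q)) (OmegaThH m N H ϑ)) x v
      = fderiv ℝ H (ψ x) (0, 0, Z (ψ x)) * dmxJ m N (ψ x) w -
          ∑ i, ∑ α, Z (ψ x) i α * duContr m N α i (ψ x) w :=
        OmegaThH_cons_of_mem_nuVertical H ϑ ⟨rfl, rfl⟩ (ψ x) w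
    _ = ∑ i, ∑ α, Z (ψ x) i α * fderiv ℝ H (ψ x) (PdirJ m N i α) * dmxJ m N (ψ x) w -
          ∑ i, ∑ α, Z (ψ x) i α * (fderiv ℝ σ x (Pi.single i 1) α * dmxJ m N (ψ x) w) := by
        simp only [duContr_eq_mul_dmxJ _ _ _ w _ hw, ContinuousLinearMap.coe_coe, hdH,
          Finset.sum_mul]
    _ = 0 := by simp only [hint, mul_assoc, sub_self]

/-- Conformal version of Lemma 2 of the paper, in coordinates.  With a closed 1-form
`θ = ϑ_i(x)dxⁱ` and `(Ω_θ)_h = Ω_h + θ∧Θ_h`: if `σ` is an integral section of the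
connection induced by the section `η` of `J¹π* → E` (`∂σ^α/∂xⁱ = (∂H/∂pⁱ_α)∘ψ`, where
`ψ(x) = (x, σ(x), η(x,σ(x)))`), then `ψ*(ι_Z (Ω_θ)_h) = 0` for every smooth
`ν`-vertical vector field `Z = Zⁱ_α ∂/∂pⁱ_α` on `J¹π*`. -/
theorem pullback_vertical_contraction_conformal_vanishes (m N : ℕ)
    (H : Jb m N → ℝ) (hH : ContDiff ℝ (⊤ : ℕ∞) H)
    (ϑ : (Fin m → ℝ) → Fin m → ℝ) (hϑ : ContDiff ℝ (⊤ : ℕ∞) ϑ)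
    (hϑclosed : ClosedOneForm m ϑ)
    (η : (Fin m → ℝ) × (Fin N → ℝ) → Fin m → Fin N → ℝ) (hη : ContDiff ℝ (⊤ : ℕ∞) η)
    (σ : (Fin m → ℝ) → Fin N → ℝ) (hσ : ContDiff ℝ (⊤ : ℕ∞) σ)
    (ψ : (Fin m → ℝ) → Jb m N)
    (hψ : ∀ x : Fin m → ℝ, ψ x = (x, σ x, η (x, σ x)))
    -- `σ` is an integral section: `∂σ^α/∂xⁱ = (∂H/∂pⁱ_α)(x, σ(x), η(x,σ(x)))`
    (hint : ∀ (x : Fin m → ℝ) (i : Fin m) (α : Fin N),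
      fderiv ℝ σ x (Pi.single i 1) α = fderiv ℝ H (ψ x) (PdirJ m N i α)) :
    ∀ Z : Jb m N → Fin m → Fin N → ℝ, ContDiff ℝ (⊤ : ℕ∞) Z →
      ∀ (x : Fin m → ℝ) (v : Fin m → Fin m → ℝ),
        pullC ψ (iotaV (fun q => (0, 0, Z q)) (OmegaThH m N H ϑ)) x v = 0 :=
  pullback_vertical_contraction_conformal_vanishes_general m N H ϑ η hη σ hσ ψ hψ hint
end
end

section
/- Work in the coordinate model with smooth Hamiltonian H(x^i,u^α,p^i_α) and Ω_h = dH∧d_mx − dp^i_α∧du^α∧(∂_i⌟d_mx). A smooth section φ(x) = (x^i, φ^α(x), φ^i_α(x)) of J¹π* → ℝ^m satisfies φ*(ι_X Ω_h) = 0 for every smooth vector field X on J¹π* if and only if φ satisfies the Hamilton–De Donder–Weyl equations: ∂φ^α/∂x^i = (∂H/∂p^i_α)∘φ for all i, α, and Σ_i ∂φ^i_α/∂x^i = −(∂H/∂u^α)∘φ for all α. -/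
open scoped BigOperators

noncomputable section

/-! Along the section `s(x) = (x, φ(x), P(x))`, `s*(ι_X Ω_h)` is an `m`-form on `ℝ^m`, so it
vanishes iff `Ω_h(X, s_*∂_1, …, s_*∂_m)` does. This is linear in `X(s(x))` and vanishes when
`X(s(x))` is tangent to the section (`m + 1` vectors in an `m`-dimensional image), so only the
vertical directions matter, and on `∂/∂pⁱ_α` and `∂/∂u^α` it equals `∂H/∂pⁱ_α − ∂ᵢφ^α` and
`∂H/∂u^α + ∑ᵢ ∂ᵢPⁱ_α`. These values come from cofactor expansions, since pointwise `Ω_h` is a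
combination of determinants. -/

open Matrix

instance {R M N ι : Type*} [Semiring R] [AddCommMonoid M] [Module R M] [AddCommMonoid N]
    [Module R N] : IsZeroApply (M [⋀^ι]→ₗ[R] N) (ι → M) N :=
  ⟨AlternatingMap.zero_apply⟩

instance {R M N ι : Type*} [Semiring R] [AddCommMonoid M] [Module R M] [AddCommMonoid N]
    [Module R N] : IsAddApply (M [⋀^ι]→ₗ[R] N) (ι → M) N :=
  ⟨AlternatingMap.add_apply⟩

theorem AlternatingMap.map_cons_eq_zero_of_span_sup_range_eq_top {K M : Type*} [Field K]
    [AddCommGroup M] [Module K M] {m : ℕ} (A : M [⋀^Fin (m + 1)]→ₗ[K] K)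
    (L : (Fin m → K) →ₗ[K] M) (s : Set M)
    (hs : Submodule.span K s ⊔ LinearMap.range L = ⊤)
    (h : ∀ ξ ∈ s, A (Fin.cons ξ fun a => L (Pi.single a 1)) = 0) (ξ : M) (v : Fin m → Fin m → K) :
    A (Fin.cons ξ fun a => L (v a)) = 0 := by
  let Φ : M →ₗ[K] (Fin m → K) [⋀^Fin m]→ₗ[K] K :=
    { toFun := fun ξ => (A.curryLeft ξ).compLinearMap L
      map_add' := fun _ _ => by rw [map_add, AlternatingMap.add_compLinearMap]
      map_smul' := fun _ _ => by ext; simp }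
  have hΦ : ∀ ξ v, Φ ξ v = A (Fin.cons ξ fun a => L (v a)) := fun _ _ => rfl
  have hs_ker : s ⊆ LinearMap.ker Φ := fun ξ hξ => by
    rw [SetLike.mem_coe, LinearMap.mem_ker,
      ← AlternatingMap.map_basis_eq_zero_iff (Pi.basisFun K (Fin m))]
    simpa [hΦ] using h ξ hξ
  have hL_ker : LinearMap.range L ≤ LinearMap.ker Φ := by
    rintro _ ⟨u, rfl⟩
    rw [LinearMap.mem_ker]
    ext v
    have hdep : ¬LinearIndependent K (Fin.cons u v : Fin (m + 1) → Fin m → K) := fun hli => by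
      simpa using hli.fintype_card_le_finrank
    have hcons : (fun j => L ((Fin.cons u v : Fin (m + 1) → Fin m → K) j)) =
        Fin.cons (L u) fun a => L (v a) := funext fun j => Fin.cases rfl (fun _ => rfl) j
    simpa [hΦ, hcons] using (A.compLinearMap L).map_linearDependent _ hdep
  have hker : LinearMap.ker Φ = ⊤ :=
    eq_top_iff.2 (hs ▸ sup_le (Submodule.span_le.2 hs_ker) hL_ker)
  rw [← hΦ, LinearMap.ker_eq_top.1 hker]
  rfl

namespace Matrix

variable {R : Type*} [CommRing R] {n : ℕ}

theorem det_of_vecCons_single_succAbove (i : Fin (n + 1)) :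
    det (of (vecCons (Pi.single i 1) fun k => Pi.single (i.succAbove k) 1) :
      Matrix (Fin (n + 1)) (Fin (n + 1)) R) = (-1) ^ (i : ℕ) := by
  have h : (of (vecCons (Pi.single i 1) fun k => Pi.single (i.succAbove k) 1) :
      Matrix (Fin (n + 1)) (Fin (n + 1)) R) =
        (1 : Matrix _ _ R).submatrix i.cycleRange.symm id := by
    ext j l
    refine Fin.cases ?_ (fun k => ?_) j <;>
      simp [Fin.cycleRange_symm_zero, Fin.cycleRange_symm_succ, one_apply, Pi.single_apply, eq_comm]
  rw [h, det_permute, det_one, mul_one, Equiv.Perm.sign_symm, Fin.sign_cycleRange]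
  simp

theorem det_of_vecCons_vecCons_zero_single (i : Fin n) (s : Fin n → R) :
    det (of (vecCons (vecCons 0 (Pi.single i 1)) fun k => vecCons (s k) (Pi.single k 1)) :
      Matrix (Fin (n + 1)) (Fin (n + 1)) R) = -s i := by
  obtain ⟨n, rfl⟩ : ∃ n', n = n' + 1 := Nat.exists_eq_add_one.mpr i.pos
  set A : Matrix (Fin (n + 2)) (Fin (n + 2)) R :=
    of (vecCons (vecCons 0 (Pi.single i 1)) fun k => vecCons (s k) (Pi.single k 1))
  rw [det_succ_column_zero, Fin.sum_univ_succ, Finset.sum_eq_single i]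
  · have hminor : A.submatrix i.succ.succAbove Fin.succ =
        of (vecCons (Pi.single i 1) fun k => Pi.single (i.succAbove k) 1) := by
      ext j l
      refine Fin.cases ?_ (fun k => ?_) j <;> simp [A, Fin.succ_succAbove_succ]
    rw [hminor, det_of_vecCons_single_succAbove]
    simp only [A, of_apply, cons_val_zero, cons_val_succ, Fin.val_succ, pow_succ, mul_zero,
      zero_mul, zero_add]
    have hsq : (-1 : R) ^ (i : ℕ) * (-1) ^ (i : ℕ) = 1 := by
      rw [← pow_add, Even.neg_one_pow ⟨i, rfl⟩]
    linear_combination (-s i) * hsq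
  · intro k _ hki
    obtain ⟨r, hr⟩ := Fin.exists_succAbove_eq (Fin.succ_injective _ |>.ne (Ne.symm hki))
    have hrow :
        A.submatrix k.succ.succAbove Fin.succ 0 = A.submatrix k.succ.succAbove Fin.succ r := by
      ext l
      simp [A, hr]
    rw [det_zero_of_row_eq (fun h => Fin.succ_ne_zero i (by rw [← hr, ← h]; rfl)) hrow]
    ring
  · simp

theorem det_of_vecCons_vecCons_zero (a : R) (c : Fin n → R) :
    det (of (vecCons (vecCons a 0) fun k => vecCons (c k) (Pi.single k 1)) :
      Matrix (Fin (n + 1)) (Fin (n + 1)) R) = a := by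
  rw [det_succ_row_zero, Fin.sum_univ_succ]
  have hminor : (of (vecCons (vecCons a 0) fun k => vecCons (c k) (Pi.single k 1)) :
      Matrix (Fin (n + 1)) (Fin (n + 1)) R).submatrix Fin.succ Fin.succ = 1 := by
    ext j l
    simp [one_apply, Pi.single_apply, eq_comm]
  simp [hminor]

theorem det_of_vecCons_single_two_rows (i : Fin n) (a b : R) (c d : Fin n → R) :
    det (of (vecCons (vecCons 0 (vecCons 0 (Pi.single i 1))) (vecCons (vecCons a (vecCons b 0))
      fun k => vecCons (c k) (vecCons (d k) (Pi.single k 1)))) :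
      Matrix (Fin (n + 2)) (Fin (n + 2)) R) = a * d i - b * c i := by
  set A : Matrix (Fin (n + 2)) (Fin (n + 2)) R :=
    of (vecCons (vecCons 0 (vecCons 0 (Pi.single i 1))) (vecCons (vecCons a (vecCons b 0))
      fun k => vecCons (c k) (vecCons (d k) (Pi.single k 1))))
  have hminor₀ : A.submatrix (Fin.succAbove 1) (Fin.succAbove 0) =
      of (vecCons (vecCons 0 (Pi.single i 1)) fun k => vecCons (d k) (Pi.single k 1)) := by
    ext j l
    refine Fin.cases ?_ (fun k => ?_) j <;> simp [A, Fin.one_succAbove_succ]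
  have hminor₁ : A.submatrix (Fin.succAbove 1) (Fin.succAbove 1) =
      of (vecCons (vecCons 0 (Pi.single i 1)) fun k => vecCons (c k) (Pi.single k 1)) := by
    ext j l
    refine Fin.cases ?_ (fun k => ?_) j <;> refine Fin.cases ?_ (fun k' => ?_) l <;>
      simp [A, Fin.one_succAbove_succ]
  rw [det_succ_row _ 1, Fin.sum_univ_succ, Fin.sum_univ_succ, Fin.succ_zero_eq_one, hminor₁,
    hminor₀, det_of_vecCons_vecCons_zero_single, det_of_vecCons_vecCons_zero_single]
  simp only [A, of_apply, cons_val_zero, cons_val_one, cons_val_succ, Pi.zero_apply, mul_zero,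
    zero_mul, Finset.sum_const_zero, add_zero, Fin.val_zero, Fin.val_one]
  ring

end Matrix

section Wedge

variable {E : Type} {k : ℕ}

theorem wedge1_eq_det (θ : Coch E 1) (ω : Coch E k) (f : E → Fin k → ℝ) (q : E)
    (hω : ∀ w, ω q w = det (of fun j => f (w j))) (z : Fin (k + 1) → E) :
    wedge1 θ ω q z = det (of fun j => vecCons (θ q fun _ => z j) (f (z j))) := by
  rw [det_succ_column_zero]
  refine Finset.sum_congr rfl fun j _ => ?_
  rw [hω]
  rfl

theorem wedge1_eq_det_of_eq_neg_det (θ : Coch E 1) (ω : Coch E k) (c : Fin (k + 1) → ℝ)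
    (f : E → Fin (k + 1) → ℝ) (q : E) (hω : ∀ w, ω q w = -det (of (vecCons c fun j => f (w j))))
    (z : Fin (k + 1) → E) :
    wedge1 θ ω q z =
      det (of (vecCons (vecCons 0 c) fun j => vecCons (θ q fun _ => z j) (f (z j)))) := by
  rw [det_succ_column_zero, Fin.sum_univ_succ]
  simp only [of_apply, cons_val_zero, mul_zero, zero_mul, zero_add]
  refine Finset.sum_congr rfl fun j _ => ?_
  have hminor : (of (vecCons (vecCons 0 c) fun j => vecCons (θ q fun _ => z j) (f (z j)))).submatrix
      j.succ.succAbove Fin.succ = of (vecCons c fun i => f ((z ∘ j.succAbove) i)) := by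
    ext r l
    refine Fin.cases ?_ (fun r => ?_) r <;> simp [Fin.succ_succAbove_succ]
  rw [hω, hminor, Fin.val_succ, pow_succ]
  simp

end Wedge

section OmegaH

variable (m N : ℕ)

def dHdx (H : Jb m N → ℝ) (q : Jb m N) : Jb m N →ₗ[ℝ] Fin (m + 1) → ℝ :=
  (fderiv ℝ H q : Jb m N →ₗ[ℝ] ℝ).vecCons (LinearMap.fst ℝ _ _)

def dpdudx (i : Fin m) (α : Fin N) : Jb m N →ₗ[ℝ] Fin (m + 2) → ℝ :=
  (LinearMap.proj (R := ℝ) (φ := fun _ : Fin N => ℝ) α ∘ₗ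
      LinearMap.proj (R := ℝ) (φ := fun _ : Fin m => Fin N → ℝ) i ∘ₗ
      LinearMap.snd ℝ _ _ ∘ₗ LinearMap.snd ℝ (Fin m → ℝ) _).vecCons
    ((LinearMap.proj (R := ℝ) (φ := fun _ : Fin N => ℝ) α ∘ₗ
      LinearMap.fst ℝ _ _ ∘ₗ LinearMap.snd ℝ (Fin m → ℝ) _).vecCons (LinearMap.fst ℝ _ _))

/-- The second term is `ι_{∂ᵢ}(dpⁱ_α ∧ du^α ∧ d_mx) = dpⁱ_α ∧ du^α ∧ (∂ᵢ⌟d_mx)`. -/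
def omegaHAlt (H : Jb m N → ℝ) (q : Jb m N) : Jb m N [⋀^Fin (m + 1)]→ₗ[ℝ] ℝ :=
  detRowAlternating.compLinearMap (dHdx m N H q) -
    ∑ i : Fin m, ∑ α : Fin N,
      (detRowAlternating.compLinearMap (dpdudx m N i α)).curryLeft (XdirJ m N i)

variable {m N}

theorem dmxJ_eq_det (q : Jb m N) (w : Fin m → Jb m N) :
    dmxJ m N q w = det (of fun j => (w j).1) :=
  det_transpose _

theorem duContr_eq_neg_det (α : Fin N) (i : Fin m) (q : Jb m N) (w : Fin m → Jb m N) :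
    duContr m N α i q w = -det (of (vecCons (vecCons 0 (Pi.single i 1))
      fun j => vecCons ((w j).2.1 α) (w j).1)) := by
  rw [duContr, iotaV, wedge1_eq_det _ _ _ q (dmxJ_eq_det q)]
  congr 3
  ext j : 1
  exact Fin.cases rfl (fun _ => rfl) j

theorem OmegaH_eq_omegaHAlt (H : Jb m N → ℝ) (q : Jb m N) (v : Fin (m + 1) → Jb m N) :
    OmegaH m N H q v = omegaHAlt m N H q v := by
  simp only [OmegaH, omegaHAlt, AlternatingMap.sub_apply, _root_.sum_apply,
    AlternatingMap.curryLeft_apply_apply, AlternatingMap.compLinearMap_apply]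
  congr 1
  · exact wedge1_eq_det _ _ _ q (dmxJ_eq_det q) v
  refine Finset.sum_congr rfl fun i _ => Finset.sum_congr rfl fun α _ => ?_
  rw [wedge1_eq_det_of_eq_neg_det _ _ _ (fun η => vecCons (η.2.1 α) η.1) q
    (duContr_eq_neg_det α i q)]
  congr 2
  ext j : 1
  exact Fin.cases rfl (fun _ => rfl) j

theorem omegaHAlt_cons_vertical (H : Jb m N → ℝ) (q ξ : Jb m N) (hξ : ξ.1 = 0)
    (W : Fin m → Jb m N) (hW : ∀ b, (W b).1 = Pi.single b 1) :
    omegaHAlt m N H q (Fin.cons ξ W) = fderiv ℝ H q ξ -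
      ∑ i : Fin m, ∑ α : Fin N, (ξ.2.2 i α * (W i).2.1 α - ξ.2.1 α * (W i).2.2 i α) := by
  simp only [omegaHAlt, AlternatingMap.sub_apply, _root_.sum_apply,
    AlternatingMap.curryLeft_apply_apply, AlternatingMap.compLinearMap_apply]
  congr 1
  · have hrows : (fun j => dHdx m N H q ((Fin.cons ξ W : Fin (m + 1) → Jb m N) j)) =
        vecCons (vecCons (fderiv ℝ H q ξ) 0)
          fun k => vecCons (fderiv ℝ H q (W k)) (Pi.single k 1) := by
      ext j : 1
      refine Fin.cases ?_ (fun k => ?_) j <;> simp [dHdx, hξ, hW]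
    rw [hrows]
    exact det_of_vecCons_vecCons_zero _ _
  refine Finset.sum_congr rfl fun i _ => Finset.sum_congr rfl fun α _ => ?_
  have hrows :
      (fun j => dpdudx m N i α (vecCons (XdirJ m N i) (Fin.cons ξ W : Fin (m + 1) → Jb m N) j)) =
        vecCons (vecCons 0 (vecCons 0 (Pi.single i 1)))
          (vecCons (vecCons (ξ.2.2 i α) (vecCons (ξ.2.1 α) 0))
            fun k => vecCons ((W k).2.2 i α) (vecCons ((W k).2.1 α) (Pi.single k 1))) := by
    ext j : 1
    refine Fin.cases ?_ (fun j => Fin.cases ?_ (fun k => ?_) j) j <;> simp [dpdudx, XdirJ, hξ, hW]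
  rw [hrows]
  exact det_of_vecCons_single_two_rows _ _ _ _ _

end OmegaH

section SecJ

variable {m N : ℕ}

theorem eq_sum_UdirJ_add_sum_PdirJ (η : Jb m N) (h : η.1 = 0) :
    η = ∑ α : Fin N, η.2.1 α • UdirJ m N α +
      ∑ i : Fin m, ∑ α : Fin N, η.2.2 i α • PdirJ m N i α := by
  refine Prod.ext ?_ (Prod.ext ?_ ?_)
  · simp [UdirJ, PdirJ, h, Prod.fst_sum]
  · funext β
    simp [UdirJ, PdirJ, Prod.snd_sum, Prod.fst_sum, Pi.single_apply]
  · funext i β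
    simp [UdirJ, PdirJ, Prod.snd_sum, Pi.single_apply]

theorem span_UdirJ_PdirJ_sup_range_eq_top (L : (Fin m → ℝ) →ₗ[ℝ] Jb m N)
    (hL : ∀ u, (L u).1 = u) :
    Submodule.span ℝ (Set.range (UdirJ m N) ∪ Set.range (Function.uncurry (PdirJ m N))) ⊔
      LinearMap.range L = ⊤ := by
  refine eq_top_iff.2 fun η _ => ?_
  rw [← add_sub_cancel (L η.1) η, add_comm]
  refine Submodule.add_mem_sup ?_ (LinearMap.mem_range_self L _)
  rw [eq_sum_UdirJ_add_sum_PdirJ (η - L η.1) (by simp [hL])]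
  refine Submodule.add_mem _ (Submodule.sum_mem _ fun α _ => Submodule.smul_mem _ _ ?_)
    (Submodule.sum_mem _ fun i _ => Submodule.sum_mem _ fun α _ => Submodule.smul_mem _ _ ?_)
  · exact Submodule.subset_span (Or.inl ⟨α, rfl⟩)
  · exact Submodule.subset_span (Or.inr ⟨(i, α), rfl⟩)

theorem fderiv_secJ_apply {φ : (Fin m → ℝ) → Fin N → ℝ} {P : (Fin m → ℝ) → Fin m → Fin N → ℝ}
    {x : Fin m → ℝ} (hφ : DifferentiableAt ℝ φ x) (hP : DifferentiableAt ℝ P x) (u : Fin m → ℝ) :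
    fderiv ℝ (secJ m N φ P) x u = (u, fderiv ℝ φ x u, fderiv ℝ P x u) := by
  have h : HasFDerivAt (secJ m N φ P)
      ((ContinuousLinearMap.id ℝ _).prod ((fderiv ℝ φ x).prod (fderiv ℝ P x))) x :=
    (hasFDerivAt_id x).prodMk (hφ.hasFDerivAt.prodMk hP.hasFDerivAt)
  rw [h.fderiv]
  rfl

theorem pullC_iotaV_OmegaH {F : Type} [NormedAddCommGroup F] [NormedSpace ℝ F]
    (H : Jb m N → ℝ) (X : Jb m N → Jb m N) (f : F → Jb m N) (x : F) (v : Fin m → F) :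
    pullC f (iotaV X (OmegaH m N H)) x v =
      omegaHAlt m N H (f x) (Fin.cons (X (f x)) fun a => fderiv ℝ f x (v a)) :=
  OmegaH_eq_omegaHAlt ..

variable {φ : (Fin m → ℝ) → Fin N → ℝ} {P : (Fin m → ℝ) → Fin m → Fin N → ℝ} {x : Fin m → ℝ}

theorem omegaHAlt_secJ_PdirJ (H : Jb m N → ℝ) (hφ : DifferentiableAt ℝ φ x)
    (hP : DifferentiableAt ℝ P x) (i : Fin m) (α : Fin N) :
    omegaHAlt m N H (secJ m N φ P x)
        (Fin.cons (PdirJ m N i α) fun a => fderiv ℝ (secJ m N φ P) x (Pi.single a 1)) =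
      fderiv ℝ H (secJ m N φ P x) (PdirJ m N i α) - fderiv ℝ φ x (Pi.single i 1) α := by
  rw [omegaHAlt_cons_vertical _ _ _ rfl _ fun b => by rw [fderiv_secJ_apply hφ hP]]
  simp [PdirJ, Pi.single_apply, ite_apply, fderiv_secJ_apply hφ hP]

theorem omegaHAlt_secJ_UdirJ (H : Jb m N → ℝ) (hφ : DifferentiableAt ℝ φ x)
    (hP : DifferentiableAt ℝ P x) (α : Fin N) :
    omegaHAlt m N H (secJ m N φ P x)
        (Fin.cons (UdirJ m N α) fun a => fderiv ℝ (secJ m N φ P) x (Pi.single a 1)) =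
      fderiv ℝ H (secJ m N φ P x) (UdirJ m N α) +
        ∑ i : Fin m, fderiv ℝ P x (Pi.single i 1) i α := by
  rw [omegaHAlt_cons_vertical _ _ _ rfl _ fun b => by rw [fderiv_secJ_apply hφ hP]]
  simp [UdirJ, Pi.single_apply, fderiv_secJ_apply hφ hP]

end SecJ

theorem HDW_iff_pullback_contractions_vanish_general (m N : ℕ)
    (H : Jb m N → ℝ)
    (φ : (Fin m → ℝ) → Fin N → ℝ) (hφ : ContDiff ℝ (⊤ : ℕ∞) φ)
    (P : (Fin m → ℝ) → Fin m → Fin N → ℝ) (hP : ContDiff ℝ (⊤ : ℕ∞) P) :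
    (∀ X : Jb m N → Jb m N, ContDiff ℝ (⊤ : ℕ∞) X →
      ∀ (x : Fin m → ℝ) (v : Fin m → Fin m → ℝ),
        pullC (secJ m N φ P) (iotaV X (OmegaH m N H)) x v = 0) ↔
    HDWeq m N H φ P := by
  have hφx x : DifferentiableAt ℝ φ x := hφ.differentiable (by simp) x
  have hPx x : DifferentiableAt ℝ P x := hP.differentiable (by simp) x
  constructor
  · intro h
    refine ⟨fun x i α => ?_, fun x α => ?_⟩
    · have h0 := h (fun _ => PdirJ m N i α) contDiff_const x (fun a => Pi.single a 1)
      rw [pullC_iotaV_OmegaH, omegaHAlt_secJ_PdirJ H (hφx x) (hPx x)] at h0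
      linarith
    · have h0 := h (fun _ => UdirJ m N α) contDiff_const x (fun a => Pi.single a 1)
      rw [pullC_iotaV_OmegaH, omegaHAlt_secJ_UdirJ H (hφx x) (hPx x)] at h0
      linarith
  · rintro ⟨hφeq, hPeq⟩ X - x v
    rw [pullC_iotaV_OmegaH]
    refine AlternatingMap.map_cons_eq_zero_of_span_sup_range_eq_top _
      (fderiv ℝ (secJ m N φ P) x : (Fin m → ℝ) →ₗ[ℝ] Jb m N) _
      (span_UdirJ_PdirJ_sup_range_eq_top _ fun u => by
        rw [ContinuousLinearMap.coe_coe, fderiv_secJ_apply (hφx x) (hPx x)]) ?_ _ v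
    rintro _ (⟨α, rfl⟩ | ⟨⟨i, α⟩, rfl⟩)
    · exact (omegaHAlt_secJ_UdirJ H (hφx x) (hPx x) α).trans (by rw [hPeq, add_neg_cancel])
    · exact (omegaHAlt_secJ_PdirJ H (hφx x) (hPx x) i α).trans (by rw [hφeq, sub_self])

/-- Coordinate Hamilton–De Donder–Weyl theorem: a smooth section
`φ(x) = (xⁱ, φ^α(x), φⁱ_α(x))` of `J¹π* → ℝ^m` satisfies `φ*(ι_X Ω_h) = 0` for every
smooth vector field `X` on `J¹π*` if and only if it satisfies the HDW equations
`∂φ^α/∂xⁱ = (∂H/∂pⁱ_α)∘φ` and `∑ᵢ ∂φⁱ_α/∂xⁱ = −(∂H/∂u^α)∘φ`. -/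
theorem HDW_iff_pullback_contractions_vanish (m N : ℕ)
    (H : Jb m N → ℝ) (hH : ContDiff ℝ (⊤ : ℕ∞) H)
    (φ : (Fin m → ℝ) → Fin N → ℝ) (hφ : ContDiff ℝ (⊤ : ℕ∞) φ)
    (P : (Fin m → ℝ) → Fin m → Fin N → ℝ) (hP : ContDiff ℝ (⊤ : ℕ∞) P) :
    (∀ X : Jb m N → Jb m N, ContDiff ℝ (⊤ : ℕ∞) X →
      ∀ (x : Fin m → ℝ) (v : Fin m → Fin m → ℝ),
        pullC (secJ m N φ P) (iotaV X (OmegaH m N H)) x v = 0) ↔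
    HDWeq m N H φ P :=
  HDW_iff_pullback_contractions_vanish_general m N H φ hφ P hP
end
end

section
/- Work in the coordinate model with smooth Hamiltonian H and Ω_h = dH∧d_mx − dp^i_α∧du^α∧(∂_i⌟d_mx). Let h = dx^j ⊗ (∂/∂x^j + Γ^α_j ∂/∂u^α + Γ^i_{αj} ∂/∂p^i_α) be the horizontal projector of an Ehresmann connection on J¹π* → ℝ^m, with smooth Christoffel coefficients Γ^α_j(x,u,p) and Γ^i_{αj}(x,u,p). Then ι_h Ω_h = (m−1) Ω_h holds if and only if Γ^α_i = ∂H/∂p^i_α and Σ_j Γ^j_{αj} = −∂H/∂u^α identically. Consequently, every integral section φ of h (i.e. ∂φ^α/∂x^j = Γ^α_j∘φ and ∂φ^i_α/∂x^j = Γ^i_{αj}∘φ) satisfies the Hamilton–De Donder–Weyl equations ∂φ^α/∂x^i = (∂H/∂p^i_α)∘φ and Σ_i ∂φ^i_α/∂x^i = −(∂H/∂u^α)∘φ. -/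
open scoped BigOperators

noncomputable section

/-- Slot-by-slot contraction of a `(k+1)`-cochain with a `(1,1)`-tensor field `K`:
`(ι_K ω)(v₀,…,v_k) = ∑ₐ ω(v₀,…,K(vₐ),…,v_k)`. -/
def iotaK {E : Type} {k : ℕ} (K : E → E → E) (ω : Coch E (k + 1)) : Coch E (k + 1) :=
  fun q v => ∑ a : Fin (k + 1), ω q (Function.update v a (K q (v a)))

/-- The horizontal projector `h = dxʲ ⊗ (∂/∂xʲ + Γ^α_j ∂/∂u^α + Γⁱ_{αj} ∂/∂pⁱ_α)` of an
Ehresmann connection on `J¹π* → ℝ^m`, with Christoffel coefficients `Γ1 q j α = Γ^α_j(q)`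
and `Γ2 q i α j = Γⁱ_{αj}(q)`. -/
def hproj (m N : ℕ) (Γ1 : Jb m N → Fin m → Fin N → ℝ)
    (Γ2 : Jb m N → Fin m → Fin N → Fin m → ℝ) : Jb m N → Jb m N → Jb m N := fun q w =>
  (w.1, fun α => ∑ j : Fin m, w.1 j * Γ1 q j α,
    fun i α => ∑ j : Fin m, w.1 j * Γ2 q i α j)

/-! ## Auxiliary determinant machinery -/

namespace HDWaux

open Matrix

lemma detUC_single {n : ℕ} (M : Matrix (Fin n) (Fin n) ℝ) (a b : Fin n) :
    (M.updateCol b (Pi.single a 1)).det = (M.updateRow a (Pi.single b 1)).det := by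
  rw [← Matrix.det_transpose (M.updateCol b (Pi.single a 1)), ← Matrix.updateRow_transpose,
    ← Matrix.adjugate_apply, ← Matrix.transpose_apply (Matrix.adjugate Mᵀ),
    Matrix.adjugate_transpose, Matrix.transpose_transpose, Matrix.adjugate_apply]

lemma detUR_cramer {n : ℕ} (M : Matrix (Fin n) (Fin n) ℝ) (a : Fin n) (r : Fin n → ℝ) :
    (M.updateRow a r).det = Matrix.cramer Mᵀ r a := by
  rw [Matrix.cramer_apply, Matrix.updateCol_transpose, Matrix.det_transpose]

lemma detUC_cramer {n : ℕ} (M : Matrix (Fin n) (Fin n) ℝ) (b : Fin n) (c : Fin n → ℝ) :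
    (M.updateCol b c).det = Matrix.cramer M c b := by
  rw [Matrix.cramer_apply]

lemma detUR_sum {n : ℕ} {ι : Type*} (s : Finset ι) (M : Matrix (Fin n) (Fin n) ℝ) (a : Fin n)
    (f : ι → Fin n → ℝ) :
    (M.updateRow a (∑ j ∈ s, f j)).det = ∑ j ∈ s, (M.updateRow a (f j)).det := by
  simp only [detUR_cramer, map_sum, Finset.sum_apply]

lemma pi_eq_sum_single {n : ℕ} (c : Fin n → ℝ) :
    c = ∑ a : Fin n, c a • (Pi.single a 1 : Fin n → ℝ) := by
  funext k
  simp [Finset.sum_apply, Pi.single_apply]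

lemma detExpand_col {n : ℕ} (M : Matrix (Fin n) (Fin n) ℝ) (b : Fin n) (c : Fin n → ℝ) :
    (M.updateCol b c).det = ∑ a, c a * (M.updateCol b (Pi.single a 1)).det := by
  rw [detUC_cramer]
  conv_lhs => rw [pi_eq_sum_single c]
  simp only [map_sum, _root_.map_smul, Finset.sum_apply, Pi.smul_apply, smul_eq_mul, detUC_cramer]

lemma detExpand_row {n : ℕ} (M : Matrix (Fin n) (Fin n) ℝ) (a : Fin n) (r : Fin n → ℝ) :
    (M.updateRow a r).det = ∑ b, r b * (M.updateRow a (Pi.single b 1)).det := by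
  rw [detUR_cramer]
  conv_lhs => rw [pi_eq_sum_single r]
  simp only [map_sum, _root_.map_smul, Finset.sum_apply, Pi.smul_apply, smul_eq_mul, detUR_cramer]

/-- Contracting columns with a matrix `M'` gives the same sum of determinants as
contracting rows. -/
lemma sum_detUC_eq_sum_detUR {n : ℕ} (M M' : Matrix (Fin n) (Fin n) ℝ) :
    ∑ b, (M.updateCol b (fun a => M' a b)).det = ∑ a, (M.updateRow a (M' a)).det := by
  calc ∑ b, (M.updateCol b (fun a => M' a b)).det
      = ∑ b, ∑ a, M' a b * (M.updateCol b (Pi.single a 1)).det := by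
        refine Finset.sum_congr rfl fun b _ => detExpand_col M b _
    _ = ∑ a, ∑ b, M' a b * (M.updateRow a (Pi.single b 1)).det := by
        rw [Finset.sum_comm]
        exact Finset.sum_congr rfl fun b _ => Finset.sum_congr rfl fun a _ => by
          rw [detUC_single]
    _ = ∑ a, (M.updateRow a (M' a)).det := by
        refine Finset.sum_congr rfl fun a _ => (detExpand_row M a _).symm

/-! ## Matrices encoding the relevant cochains -/

/-- The matrix whose row `0` is `t (v b)` and whose row `a+1` is `(v b).1 a`. -/
def gMat (m N : ℕ) (t : Jb m N → ℝ) (v : Fin (m + 1) → Jb m N) :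
    Matrix (Fin (m + 1)) (Fin (m + 1)) ℝ :=
  Matrix.of fun a b => Fin.cases (t (v b)) (fun a' => (v b).1 a') a

/-- The matrix for `dpⁱ_α ∧ du^α ∧ (∂_i ⌟ d_mx)`. -/
def pMat (m N : ℕ) (i : Fin m) (α : Fin N) (v : Fin (m + 1) → Jb m N) :
    Matrix (Fin (m + 1)) (Fin (m + 1)) ℝ :=
  Matrix.of fun a b =>
    Fin.cases ((v b).2.2 i α) (fun a' => if a' = i then (v b).2.1 α else (v b).1 a') a

lemma wedge1_dmx_eq (m N : ℕ) (θ : Coch (Jb m N) 1) (q : Jb m N) (v : Fin (m + 1) → Jb m N) :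
    wedge1 θ (dmxJ m N) q v = (gMat m N (fun w => θ q fun _ => w) v).det := by
  rw [gMat, Matrix.det_succ_row_zero]
  refine Finset.sum_congr rfl fun j _ => ?_
  simp only [wedge1, dmxJ, Matrix.of_apply, Matrix.submatrix_apply, Fin.cases_zero,
    Fin.cases_succ, Function.comp]
  congr 1


lemma duContr_eq (m N : ℕ) (i : Fin m) (α : Fin N) (q : Jb m N) (w : Fin m → Jb m N) :
    duContr m N α i q w =
      (Matrix.of fun a b => if a = i then (w b).2.1 α else (w b).1 a).det := by
  obtain ⟨m, rfl⟩ : ∃ k, m = k + 1 := ⟨m - 1, (Nat.succ_pred_eq_of_pos i.pos).symm⟩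
  rw [Matrix.det_succ_row _ i]
  unfold duContr iotaV wedge1
  rw [Fin.sum_univ_succ]
  have h0 : ((Fin.cons (XdirJ (m + 1) N i) w : Fin (m + 2) → Jb (m + 1) N) 0).2.1 α = 0 := by
    simp [XdirJ]
  rw [neg_add]
  have hz : -((-1 : ℝ) ^ ((0 : Fin (m + 2)) : ℕ) * duJ (m + 1) N α q
      (fun _ => (Fin.cons (XdirJ (m + 1) N i) w : Fin (m + 2) → Jb (m + 1) N) 0) *
      dmxJ (m + 1) N q ((Fin.cons (XdirJ (m + 1) N i) w : Fin (m + 2) → Jb (m + 1) N) ∘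
        Fin.succAbove 0)) = 0 := by
    simp [duJ, XdirJ]
  rw [hz, zero_add, ← Finset.sum_neg_distrib]
  refine Finset.sum_congr rfl fun j _ => ?_
  have hcomp : (Fin.cons (XdirJ (m + 1) N i) w : Fin (m + 2) → Jb (m + 1) N) ∘
        Fin.succAbove j.succ
      = (Fin.cons (XdirJ (m + 1) N i) (w ∘ Fin.succAbove j) : Fin (m + 1) → Jb (m + 1) N) := by
    funext b
    induction b using Fin.cases with
    | zero => simp
    | succ b => simp [Fin.succ_succAbove_succ]
  rw [hcomp]
  have hdmx : dmxJ (m + 1) N q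
        (Fin.cons (XdirJ (m + 1) N i) (w ∘ Fin.succAbove j) : Fin (m + 1) → Jb (m + 1) N)
      = (-1 : ℝ) ^ (i : ℕ) *
        (Matrix.of fun a b => (w (j.succAbove b)).1 (i.succAbove a)).det := by
    rw [dmxJ, Matrix.det_succ_column_zero]
    rw [Finset.sum_eq_single i]
    · simp only [XdirJ, Matrix.of_apply, Fin.cons_zero, Pi.single_eq_same, mul_one]
      have : ((Matrix.of fun a b => ((Fin.cons (((Pi.single i 1 : Fin (m+1) → ℝ), 0, 0) : Jb (m + 1) N) (w ∘ Fin.succAbove j) : Fin (m + 1) → Jb (m + 1) N) b).1 a).submatrix i.succAbove Fin.succ)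
          = Matrix.of fun a b => (w (j.succAbove b)).1 (i.succAbove a) := by
        ext a b
        simp [Matrix.submatrix_apply]
      rw [this]
    · intro a _ ha
      simp [XdirJ, Pi.single_eq_of_ne ha]
    · simp
  rw [hdmx]
  have hsub : ((Matrix.of fun a b =>
        if a = i then (w b).2.1 α else (w b).1 a).submatrix i.succAbove j.succAbove)
      = Matrix.of fun a b => (w (j.succAbove b)).1 (i.succAbove a) := by
    ext a b
    simp [Matrix.submatrix_apply, Fin.succAbove_ne i a]
  rw [hsub]
  simp only [duJ, Fin.cons_succ, Fin.val_succ, Matrix.of_apply, if_pos rfl, if_true, eq_self_iff_true, pow_succ, pow_add]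
  ring

lemma wedge1_dp_duContr (m N : ℕ) (i : Fin m) (α : Fin N) (q : Jb m N)
    (v : Fin (m + 1) → Jb m N) :
    wedge1 (dpJ m N i α) (duContr m N α i) q v = (pMat m N i α v).det := by
  rw [pMat, Matrix.det_succ_row_zero]
  unfold wedge1
  refine Finset.sum_congr rfl fun j _ => ?_
  rw [duContr_eq]
  simp only [dpJ, Matrix.of_apply, Matrix.submatrix_apply, Fin.cases_zero, Fin.cases_succ,
    Function.comp]
  congr 1

lemma OmegaH_eq (m N : ℕ) (H : Jb m N → ℝ) (q : Jb m N) (v : Fin (m + 1) → Jb m N) :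
    OmegaH m N H q v = (gMat m N (fderiv ℝ H q) v).det - ∑ i, ∑ α, (pMat m N i α v).det := by
  rw [OmegaH]
  congr 1
  · exact wedge1_dmx_eq m N (dFun H) q v
  · exact Finset.sum_congr rfl fun i _ => Finset.sum_congr rfl fun α _ =>
      wedge1_dp_duContr m N i α q v

/-- Evaluation of `gMat` determinants on the basis tuple `(w, ∂/∂x¹, …, ∂/∂x^m)` when
`w` is vertical. -/
lemma gMat_cons_eval (m N : ℕ) (t : Jb m N → ℝ) (w : Jb m N) (hw : w.1 = 0) :
    (gMat m N t (Fin.cons w (fun j => XdirJ m N j) : Fin (m + 1) → Jb m N)).det = t w := by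
  rw [gMat, Matrix.det_succ_column_zero, Fin.sum_univ_succ, Fin.succAbove_zero]
  have h1 : ((Matrix.of fun a b =>
        Fin.cases (t ((Fin.cons w (fun j => XdirJ m N j) : Fin (m + 1) → Jb m N) b))
          (fun a' => ((Fin.cons w (fun j => XdirJ m N j) : Fin (m + 1) → Jb m N) b).1 a') a
        : Matrix (Fin (m + 1)) (Fin (m + 1)) ℝ).submatrix Fin.succ Fin.succ)
      = (1 : Matrix (Fin m) (Fin m) ℝ) := by
    ext a b
    simp [Matrix.submatrix_apply, XdirJ, Matrix.one_apply, Pi.single_apply, eq_comm]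
  rw [h1]
  simp [hw]

/-- Decomposition of a tangent vector in the coordinate basis. -/
lemma basis_decomp (m N : ℕ) (w : Jb m N) :
    w = (∑ j, w.1 j • XdirJ m N j) + (∑ α, w.2.1 α • UdirJ m N α)
        + ∑ i, ∑ α, w.2.2 i α • PdirJ m N i α := by
  refine Prod.ext ?_ (Prod.ext ?_ ?_)
  · simp only [Prod.fst_sum, Prod.fst_add, Prod.smul_fst, XdirJ, UdirJ, PdirJ, smul_zero,
      Finset.sum_const_zero, add_zero]
    funext k
    simp [Finset.sum_apply, Pi.single_apply]
  · simp only [Prod.snd_sum, Prod.snd_add, Prod.smul_snd, Prod.fst_sum, Prod.fst_add,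
      Prod.smul_fst, XdirJ, UdirJ, PdirJ, smul_zero, Finset.sum_const_zero, add_zero, zero_add]
    funext β
    simp [Finset.sum_apply, Pi.single_apply]
  · simp only [Prod.snd_sum, Prod.snd_add, Prod.smul_snd, XdirJ, UdirJ, PdirJ, smul_zero,
      Finset.sum_const_zero, add_zero, zero_add]
    funext i' α'
    simp [Finset.sum_apply, Pi.single_apply, apply_ite (fun f : Fin N → ℝ => f α')]

/-- The horizontal lift of `∂/∂xʲ`. -/
def eHor (m N : ℕ) (Γ1 : Jb m N → Fin m → Fin N → ℝ)
    (Γ2 : Jb m N → Fin m → Fin N → Fin m → ℝ) (q : Jb m N) (j : Fin m) : Jb m N :=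
  (Pi.single j 1, fun α => Γ1 q j α, fun i α => Γ2 q i α j)

lemma hproj_eq_sum (m N : ℕ) (Γ1 : Jb m N → Fin m → Fin N → ℝ)
    (Γ2 : Jb m N → Fin m → Fin N → Fin m → ℝ) (q w : Jb m N) :
    hproj m N Γ1 Γ2 q w = ∑ j, w.1 j • eHor m N Γ1 Γ2 q j := by
  refine Prod.ext ?_ (Prod.ext ?_ ?_)
  · simp only [hproj, Prod.fst_sum, Prod.smul_fst, eHor]
    funext k
    simp [Finset.sum_apply, Pi.single_apply]
  · simp only [hproj, Prod.snd_sum, Prod.snd_add, Prod.smul_snd, Prod.fst_sum, Prod.fst_add,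
      Prod.smul_fst, eHor]
    funext α
    simp [Finset.sum_apply, mul_comm]
  · simp only [hproj, Prod.snd_sum, Prod.smul_snd, eHor]
    funext i α
    simp [Finset.sum_apply, mul_comm]

/-- Decomposition of the determinant of `gMat L v` along the vertical coordinates of the
top row. -/
lemma gMat_det_decomp (m N : ℕ) (L : Jb m N →L[ℝ] ℝ) (v : Fin (m + 1) → Jb m N) :
    (gMat m N L v).det =
      (∑ α, L (UdirJ m N α) * (gMat m N (fun w => w.2.1 α) v).det) +
      ∑ i, ∑ α, L (PdirJ m N i α) * (gMat m N (fun w => w.2.2 i α) v).det := by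
  have hrow : (fun b => L (v b))
      = (∑ j, L (XdirJ m N j) • fun b => (v b).1 j)
        + (∑ α, L (UdirJ m N α) • fun b => (v b).2.1 α)
        + ∑ i, ∑ α, L (PdirJ m N i α) • fun b => (v b).2.2 i α := by
    funext b
    conv_lhs => rw [basis_decomp m N (v b)]
    simp [Finset.sum_apply, map_sum, Finset.mul_sum, mul_comm]
  have hself : gMat m N L v = (gMat m N L v).updateRow 0 (fun b => L (v b)) := by
    rw [show (fun b => L (v b)) = (gMat m N L v) 0 from rfl, Matrix.updateRow_eq_self]
  have hx : ∀ j : Fin m, ((gMat m N L v).updateRow 0 (fun b => (v b).1 j)).det = 0 := by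
    intro j
    refine Matrix.det_zero_of_row_eq (Fin.succ_ne_zero j).symm ?_
    rw [Matrix.updateRow_self, Matrix.updateRow_ne (Fin.succ_ne_zero j)]
    rfl
  have hu : ∀ α : Fin N, (gMat m N L v).updateRow 0 (fun b => (v b).2.1 α)
      = gMat m N (fun w => w.2.1 α) v := by
    intro α
    ext a b
    induction a using Fin.cases with
    | zero => simp [Matrix.updateRow_self, gMat]
    | succ a => simp [Matrix.updateRow_ne (Fin.succ_ne_zero a), gMat]
  have hp : ∀ (i : Fin m) (α : Fin N), (gMat m N L v).updateRow 0 (fun b => (v b).2.2 i α)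
      = gMat m N (fun w => w.2.2 i α) v := by
    intro i α
    ext a b
    induction a using Fin.cases with
    | zero => simp [Matrix.updateRow_self, gMat]
    | succ a => simp [Matrix.updateRow_ne (Fin.succ_ne_zero a), gMat]
  conv_lhs => rw [hself, hrow]
  rw [Matrix.det_updateRow_add, Matrix.det_updateRow_add]
  simp only [detUR_sum, Matrix.det_updateRow_smul, smul_eq_mul, hx, hu, hp, mul_zero,
    Finset.sum_const_zero, zero_add]

/-- Row-covector families for `gMat` and `pMat`. -/
def rG (m N : ℕ) (t : Jb m N → ℝ) : Fin (m + 1) → Jb m N → ℝ :=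
  Fin.cases t (fun a' w => w.1 a')

def rP (m N : ℕ) (i : Fin m) (α : Fin N) : Fin (m + 1) → Jb m N → ℝ :=
  Fin.cases (fun w => w.2.2 i α) (fun a' w => if a' = i then w.2.1 α else w.1 a')

lemma gMat_eq_rG (m N : ℕ) (t : Jb m N → ℝ) (v : Fin (m + 1) → Jb m N) :
    gMat m N t v = Matrix.of fun a b => rG m N t a (v b) := by
  ext a b
  induction a using Fin.cases with
  | zero => simp [gMat, rG]
  | succ a => simp [gMat, rG]

lemma pMat_eq_rP (m N : ℕ) (i : Fin m) (α : Fin N) (v : Fin (m + 1) → Jb m N) :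
    pMat m N i α v = Matrix.of fun a b => rP m N i α a (v b) := by
  ext a b
  induction a using Fin.cases with
  | zero => simp [pMat, rP]
  | succ a => simp [pMat, rP]

/-- Slot-by-slot contraction of columns equals slot-by-slot contraction of rows. -/
lemma sum_update_det (m N : ℕ) (r : Fin (m + 1) → Jb m N → ℝ) (K : Jb m N → Jb m N)
    (v : Fin (m + 1) → Jb m N) :
    ∑ b, (Matrix.of fun a b' => r a (Function.update v b (K (v b)) b')).det
      = ∑ a, ((Matrix.of fun a b' => r a (v b')).updateRow a
          (fun b' => r a (K (v b')))).det := by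
  have h1 : ∀ b : Fin (m + 1), (Matrix.of fun a b' => r a (Function.update v b (K (v b)) b'))
      = (Matrix.of fun a b' => r a (v b')).updateCol b
          (fun a => (Matrix.of fun a b' => r a (K (v b'))) a b) := by
    intro b
    ext a b'
    by_cases h : b' = b <;>
      simp [Matrix.updateCol_apply, h, Function.update_apply]
  simp_rw [h1]
  exact sum_detUC_eq_sum_detUR _ _

lemma det_dup_row_zero (m N : ℕ) (r : Fin (m + 1) → Jb m N → ℝ) (v : Fin (m + 1) → Jb m N)
    (a0 : Fin (m + 1)) (j : Fin m) (hne : a0 ≠ j.succ)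
    (hrow : ∀ w, r j.succ w = w.1 j) :
    ((Matrix.of fun a b => r a (v b)).updateRow a0 (fun b => (v b).1 j)).det = 0 := by
  refine Matrix.det_zero_of_row_eq hne ?_
  funext b
  rw [Matrix.updateRow_self, Matrix.updateRow_ne hne.symm]
  simp [hrow]

lemma sumG (m N : ℕ) (Γ1 : Jb m N → Fin m → Fin N → ℝ)
    (Γ2 : Jb m N → Fin m → Fin N → Fin m → ℝ) (L : Jb m N →L[ℝ] ℝ) (q : Jb m N)
    (v : Fin (m + 1) → Jb m N) :
    ∑ b, (gMat m N L (Function.update v b (hproj m N Γ1 Γ2 q (v b)))).det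
      = (m : ℝ) * (gMat m N L v).det := by
  simp_rw [gMat_eq_rG]
  rw [sum_update_det m N (rG m N L) (hproj m N Γ1 Γ2 q) v, Fin.sum_univ_succ]
  have h0 : ((Matrix.of fun a b' => rG m N (⇑L) a (v b')).updateRow 0
      (fun b' => rG m N (⇑L) 0 (hproj m N Γ1 Γ2 q (v b')))).det = 0 := by
    have hr : (fun b' => rG m N (⇑L) 0 (hproj m N Γ1 Γ2 q (v b')))
        = ∑ j : Fin m, L (eHor m N Γ1 Γ2 q j) • fun b' => (v b').1 j := by
      funext b'
      simp only [rG, Fin.cases_zero, hproj_eq_sum, map_sum, _root_.map_smul, smul_eq_mul,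
        Finset.sum_apply, Pi.smul_apply]
      exact Finset.sum_congr rfl fun j _ => mul_comm _ _
    rw [hr, detUR_sum]
    refine Finset.sum_eq_zero fun j _ => ?_
    rw [Matrix.det_updateRow_smul]
    rw [det_dup_row_zero m N (rG m N L) v 0 j (Fin.succ_ne_zero j).symm
      (fun w => by simp [rG])]
    simp
  rw [h0, zero_add]
  have hs : ∀ a : Fin m, ((Matrix.of fun a' b' => rG m N (⇑L) a' (v b')).updateRow a.succ
      (fun b' => rG m N (⇑L) a.succ (hproj m N Γ1 Γ2 q (v b')))).det
      = ((Matrix.of fun a' b' => rG m N (⇑L) a' (v b'))).det := by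
    intro a
    have : (fun b' => rG m N (⇑L) a.succ (hproj m N Γ1 Γ2 q (v b')))
        = (Matrix.of fun a' b' => rG m N (⇑L) a' (v b')) a.succ := by
      funext b'
      simp [rG, hproj]
    rw [this, Matrix.updateRow_eq_self]
  simp only [hs]
  simp [Finset.sum_const, Finset.card_univ]

lemma sumP (m N : ℕ) (Γ1 : Jb m N → Fin m → Fin N → ℝ)
    (Γ2 : Jb m N → Fin m → Fin N → Fin m → ℝ) (i : Fin m) (α : Fin N) (q : Jb m N)
    (v : Fin (m + 1) → Jb m N) :
    ∑ b, (pMat m N i α (Function.update v b (hproj m N Γ1 Γ2 q (v b)))).det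
      = ((m : ℝ) - 1) * (pMat m N i α v).det
        + Γ1 q i α * (gMat m N (fun w => w.2.2 i α) v).det
        - Γ2 q i α i * (gMat m N (fun w => w.2.1 α) v).det := by
  simp_rw [pMat_eq_rP]
  rw [sum_update_det m N (rP m N i α) (hproj m N Γ1 Γ2 q) v, Fin.sum_univ_succ]
  -- the contracted row `0`
  have h0 : ((Matrix.of fun a b' => rP m N i α a (v b')).updateRow 0
      (fun b' => rP m N i α 0 (hproj m N Γ1 Γ2 q (v b')))).det
      = -(Γ2 q i α i * (gMat m N (fun w => w.2.1 α) v).det) := by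
    have hr : (fun b' => rP m N i α 0 (hproj m N Γ1 Γ2 q (v b')))
        = ∑ j : Fin m, Γ2 q i α j • fun b' => (v b').1 j := by
      funext b'
      simp only [rP, Fin.cases_zero, hproj, Finset.sum_apply, Pi.smul_apply, smul_eq_mul]
      exact Finset.sum_congr rfl fun j _ => mul_comm _ _
    rw [hr, detUR_sum, Finset.sum_eq_single i]
    · rw [Matrix.det_updateRow_smul]
      have hF : (Matrix.of fun a b' => rP m N i α a (v b')).updateRow 0 (fun b' => (v b').1 i)
          = (gMat m N (fun w => w.2.1 α) v).submatrix (Equiv.swap 0 i.succ) id := by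
        ext a b
        induction a using Fin.cases with
        | zero =>
          rw [Matrix.updateRow_self]
          simp [Matrix.submatrix_apply, Equiv.swap_apply_left, gMat]
        | succ a =>
          rw [Matrix.updateRow_ne (Fin.succ_ne_zero a)]
          by_cases h : a = i
          · subst h
            simp [Matrix.submatrix_apply, Equiv.swap_apply_right, gMat, rP]
          · have hne1 : a.succ ≠ 0 := Fin.succ_ne_zero a
            have hne2 : a.succ ≠ i.succ := by
              simpa [Fin.succ_inj] using h
            simp [Matrix.submatrix_apply, Equiv.swap_apply_of_ne_of_ne hne1 hne2, gMat, rP, h]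
      rw [hF, Matrix.det_permute, Equiv.Perm.sign_swap (Fin.succ_ne_zero i).symm]
      simp [smul_eq_mul]
    · intro j _ hj
      rw [Matrix.det_updateRow_smul,
        det_dup_row_zero m N (rP m N i α) v 0 j (Fin.succ_ne_zero j).symm
          (fun w => by simp [rP, hj])]
      simp
    · simp
  rw [h0]
  -- the contracted rows `a+1`
  have hs : ∀ a : Fin m, ((Matrix.of fun a' b' => rP m N i α a' (v b')).updateRow a.succ
      (fun b' => rP m N i α a.succ (hproj m N Γ1 Γ2 q (v b')))).det
      = if a = i then Γ1 q i α * (gMat m N (fun w => w.2.2 i α) v).det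
        else (Matrix.of fun a' b' => rP m N i α a' (v b')).det := by
    intro a
    by_cases h : a = i
    · rw [h, if_pos rfl]
      have hr : (fun b' => rP m N i α i.succ (hproj m N Γ1 Γ2 q (v b')))
          = ∑ j : Fin m, Γ1 q j α • fun b' => (v b').1 j := by
        funext b'
        simp only [rP, Fin.cases_succ, if_pos rfl, hproj, Finset.sum_apply, Pi.smul_apply,
          smul_eq_mul]
        exact Finset.sum_congr rfl fun j _ => mul_comm _ _
      rw [hr, detUR_sum, Finset.sum_eq_single i]
      · rw [Matrix.det_updateRow_smul]
        have hF : (Matrix.of fun a' b' => rP m N i α a' (v b')).updateRow i.succ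
            (fun b' => (v b').1 i) = gMat m N (fun w => w.2.2 i α) v := by
          ext a' b
          induction a' using Fin.cases with
          | zero =>
            rw [Matrix.updateRow_ne (Fin.succ_ne_zero i).symm]
            simp [gMat, rP]
          | succ a' =>
            by_cases h' : a' = i
            · rw [h', Matrix.updateRow_self]
              simp [gMat]
            · rw [Matrix.updateRow_ne (by simpa [Fin.succ_inj] using h')]
              simp [gMat, rP, h']
        rw [hF]
      · intro j _ hj
        rw [Matrix.det_updateRow_smul,
          det_dup_row_zero m N (rP m N i α) v i.succ j (by simpa [Fin.succ_inj] using hj.symm)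
            (fun w => by simp [rP, hj])]
        simp
      · simp
    · rw [if_neg h]
      have : (fun b' => rP m N i α a.succ (hproj m N Γ1 Γ2 q (v b')))
          = (Matrix.of fun a' b' => rP m N i α a' (v b')) a.succ := by
        funext b'
        simp [rP, hproj, h]
      rw [this, Matrix.updateRow_eq_self]
  simp only [hs]
  have hsplit : ∀ a : Fin m,
      (if a = i then Γ1 q i α * (gMat m N (fun w => w.2.2 i α) v).det
        else (Matrix.of fun a' b' => rP m N i α a' (v b')).det)
      = (if a = i then Γ1 q i α * (gMat m N (fun w => w.2.2 i α) v).det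
          - (Matrix.of fun a' b' => rP m N i α a' (v b')).det else 0)
        + (Matrix.of fun a' b' => rP m N i α a' (v b')).det := by
    intro a
    by_cases h : a = i <;> simp [h]
  simp only [hsplit]
  rw [Finset.sum_add_distrib, Finset.sum_ite_eq' Finset.univ i, if_pos (Finset.mem_univ i)]
  simp [Finset.sum_const, Finset.card_univ]
  ring

/-- The master identity: `ι_h Ω_h − (m−1) Ω_h` in terms of the basic `(m+1)`-forms
`du^α∧d_mx` and `dpⁱ_α∧d_mx`. -/
lemma master (m N : ℕ) (H : Jb m N → ℝ) (Γ1 : Jb m N → Fin m → Fin N → ℝ)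
    (Γ2 : Jb m N → Fin m → Fin N → Fin m → ℝ) (q : Jb m N) (v : Fin (m + 1) → Jb m N) :
    iotaK (hproj m N Γ1 Γ2) (OmegaH m N H) q v
      = ((m : ℝ) - 1) * OmegaH m N H q v
        + (∑ α, (fderiv ℝ H q (UdirJ m N α) + ∑ j, Γ2 q j α j) *
            (gMat m N (fun w => w.2.1 α) v).det)
        + ∑ i, ∑ α, (fderiv ℝ H q (PdirJ m N i α) - Γ1 q i α) *
            (gMat m N (fun w => w.2.2 i α) v).det := by
  have hdet := gMat_det_decomp m N (fderiv ℝ H q) v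
  simp only [iotaK, OmegaH_eq]
  rw [Finset.sum_sub_distrib, sumG m N Γ1 Γ2 (fderiv ℝ H q) q v]
  have hsw : (∑ b : Fin (m + 1), ∑ i : Fin m, ∑ α : Fin N,
        (pMat m N i α (Function.update v b (hproj m N Γ1 Γ2 q (v b)))).det)
      = ∑ i : Fin m, ∑ α : Fin N, ∑ b : Fin (m + 1),
        (pMat m N i α (Function.update v b (hproj m N Γ1 Γ2 q (v b)))).det := by
    rw [Finset.sum_comm]
    exact Finset.sum_congr rfl fun i _ => Finset.sum_comm
  rw [hsw]
  simp only [sumP m N Γ1 Γ2]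
  have e1 : (∑ i : Fin m, ∑ α : Fin N,
        (((m : ℝ) - 1) * (pMat m N i α v).det
          + Γ1 q i α * (gMat m N (fun w => w.2.2 i α) v).det
          - Γ2 q i α i * (gMat m N (fun w => w.2.1 α) v).det))
      = ((m : ℝ) - 1) * (∑ i : Fin m, ∑ α : Fin N, (pMat m N i α v).det)
        + (∑ i : Fin m, ∑ α : Fin N, Γ1 q i α * (gMat m N (fun w => w.2.2 i α) v).det)
        - ∑ α : Fin N, (∑ i : Fin m, Γ2 q i α i) * (gMat m N (fun w => w.2.1 α) v).det := by
    simp only [Finset.sum_add_distrib, Finset.sum_sub_distrib, Finset.mul_sum]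
    congr 1
    rw [Finset.sum_comm]
    exact Finset.sum_congr rfl fun α _ => (Finset.sum_mul _ _ _).symm
  rw [e1]
  have e3 : (∑ α : Fin N, (fderiv ℝ H q (UdirJ m N α) + ∑ j, Γ2 q j α j) *
        (gMat m N (fun w => w.2.1 α) v).det)
      = (∑ α : Fin N, fderiv ℝ H q (UdirJ m N α) * (gMat m N (fun w => w.2.1 α) v).det)
        + ∑ α : Fin N, (∑ j, Γ2 q j α j) * (gMat m N (fun w => w.2.1 α) v).det := by
    simp only [add_mul, Finset.sum_add_distrib]
  have e4 : (∑ i : Fin m, ∑ α : Fin N, (fderiv ℝ H q (PdirJ m N i α) - Γ1 q i α) *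
        (gMat m N (fun w => w.2.2 i α) v).det)
      = (∑ i : Fin m, ∑ α : Fin N, fderiv ℝ H q (PdirJ m N i α) *
          (gMat m N (fun w => w.2.2 i α) v).det)
        - ∑ i : Fin m, ∑ α : Fin N, Γ1 q i α * (gMat m N (fun w => w.2.2 i α) v).det := by
    simp only [sub_mul, Finset.sum_sub_distrib]
  rw [e3, e4, hdet]
  ring

end HDWaux

/-- HDW equations via an Ehresmann connection, in coordinates: the horizontal projector
`h` satisfies `ι_h Ω_h = (m−1) Ω_h` iff `Γ^α_i = ∂H/∂pⁱ_α` and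
`∑ⱼ Γʲ_{αj} = −∂H/∂u^α` identically; and whenever `ι_h Ω_h = (m−1) Ω_h` holds, every
integral section `φ` of `h` satisfies the Hamilton–De Donder–Weyl equations. -/
theorem connection_HDW (m N : ℕ)
    (H : Jb m N → ℝ) (hH : ContDiff ℝ (⊤ : ℕ∞) H)
    (Γ1 : Jb m N → Fin m → Fin N → ℝ) (hΓ1 : ContDiff ℝ (⊤ : ℕ∞) Γ1)
    (Γ2 : Jb m N → Fin m → Fin N → Fin m → ℝ) (hΓ2 : ContDiff ℝ (⊤ : ℕ∞) Γ2) :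
    ((∀ (q : Jb m N) (v : Fin (m + 1) → Jb m N),
        iotaK (hproj m N Γ1 Γ2) (OmegaH m N H) q v = ((m : ℝ) - 1) * OmegaH m N H q v) ↔
      (∀ q : Jb m N,
        (∀ (i : Fin m) (α : Fin N), Γ1 q i α = fderiv ℝ H q (PdirJ m N i α)) ∧
        (∀ α : Fin N, (∑ j : Fin m, Γ2 q j α j) = -(fderiv ℝ H q (UdirJ m N α))))) ∧
    ((∀ (q : Jb m N) (v : Fin (m + 1) → Jb m N),
        iotaK (hproj m N Γ1 Γ2) (OmegaH m N H) q v = ((m : ℝ) - 1) * OmegaH m N H q v) →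
      ∀ (φ : (Fin m → ℝ) → Fin N → ℝ) (P : (Fin m → ℝ) → Fin m → Fin N → ℝ),
        ContDiff ℝ (⊤ : ℕ∞) φ → ContDiff ℝ (⊤ : ℕ∞) P →
        -- `φ` is an integral section of `h`
        (∀ (x : Fin m → ℝ) (j : Fin m) (α : Fin N),
          fderiv ℝ φ x (Pi.single j 1) α = Γ1 (secJ m N φ P x) j α) →
        (∀ (x : Fin m → ℝ) (j i : Fin m) (α : Fin N),
          fderiv ℝ P x (Pi.single j 1) i α = Γ2 (secJ m N φ P x) i α j) →
        HDWeq m N H φ P) := by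
  have hiff : (∀ (q : Jb m N) (v : Fin (m + 1) → Jb m N),
        iotaK (hproj m N Γ1 Γ2) (OmegaH m N H) q v = ((m : ℝ) - 1) * OmegaH m N H q v) ↔
      (∀ q : Jb m N,
        (∀ (i : Fin m) (α : Fin N), Γ1 q i α = fderiv ℝ H q (PdirJ m N i α)) ∧
        (∀ α : Fin N, (∑ j : Fin m, Γ2 q j α j) = -(fderiv ℝ H q (UdirJ m N α)))) := by
    constructor
    · intro hiota q
      constructor
      · intro i α
        have key := hiota q (Fin.cons (PdirJ m N i α) (fun j => XdirJ m N j))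
        rw [HDWaux.master] at key
        have hD : ∀ β : Fin N, (HDWaux.gMat m N (fun w => w.2.1 β)
            (Fin.cons (PdirJ m N i α) (fun j => XdirJ m N j) : Fin (m + 1) → Jb m N)).det
            = 0 := by
          intro β
          rw [HDWaux.gMat_cons_eval m N _ _ rfl]
          simp [PdirJ]
        have hE : ∀ (i' : Fin m) (α' : Fin N), (HDWaux.gMat m N (fun w => w.2.2 i' α')
            (Fin.cons (PdirJ m N i α) (fun j => XdirJ m N j) : Fin (m + 1) → Jb m N)).det
            = if i' = i ∧ α' = α then 1 else 0 := by
          intro i' α'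
          rw [HDWaux.gMat_cons_eval m N _ _ rfl]
          by_cases h1 : i' = i <;> by_cases h2 : α' = α <;>
            simp [PdirJ, Pi.single_apply, h1, h2]
        have hsum : (∑ i' : Fin m, ∑ α' : Fin N,
            (fderiv ℝ H q (PdirJ m N i' α') - Γ1 q i' α') *
              (HDWaux.gMat m N (fun w => w.2.2 i' α')
                (Fin.cons (PdirJ m N i α) fun j => XdirJ m N j)).det)
            = fderiv ℝ H q (PdirJ m N i α) - Γ1 q i α := by
          rw [Finset.sum_eq_single i (fun b _ hb => Finset.sum_eq_zero fun α' _ => by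
              rw [hE b α']; simp [hb]) (fun h => absurd (Finset.mem_univ i) h)]
          rw [Finset.sum_eq_single α (fun b _ hb => by rw [hE i b]; simp [hb])
              (fun h => absurd (Finset.mem_univ α) h)]
          rw [hE i α]
          simp
        simp only [hD, mul_zero, Finset.sum_const_zero, add_zero] at key
        rw [hsum] at key
        linarith
      · intro α
        have key := hiota q (Fin.cons (UdirJ m N α) (fun j => XdirJ m N j))
        rw [HDWaux.master] at key
        have hD : ∀ β : Fin N, (HDWaux.gMat m N (fun w => w.2.1 β)
            (Fin.cons (UdirJ m N α) (fun j => XdirJ m N j) : Fin (m + 1) → Jb m N)).det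
            = if β = α then 1 else 0 := by
          intro β
          rw [HDWaux.gMat_cons_eval m N _ _ rfl]
          simp [UdirJ, Pi.single_apply, eq_comm]
        have hE : ∀ (i' : Fin m) (α' : Fin N), (HDWaux.gMat m N (fun w => w.2.2 i' α')
            (Fin.cons (UdirJ m N α) (fun j => XdirJ m N j) : Fin (m + 1) → Jb m N)).det
            = 0 := by
          intro i' α'
          rw [HDWaux.gMat_cons_eval m N _ _ rfl]
          simp [UdirJ]
        simp only [hD, hE, mul_zero, mul_ite, mul_one, Finset.sum_const_zero, add_zero,
          Finset.sum_ite_eq'] at key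
        simp at key
        linarith
    · intro hc q v
      rw [HDWaux.master]
      have h1 := (hc q).1
      have h2 := (hc q).2
      have hcα : ∀ α : Fin N, fderiv ℝ H q (UdirJ m N α) + ∑ j, Γ2 q j α j = 0 := by
        intro α
        rw [h2 α]
        ring
      have hdiα : ∀ (i : Fin m) (α : Fin N),
          fderiv ℝ H q (PdirJ m N i α) - Γ1 q i α = 0 := by
        intro i α
        rw [h1 i α]
        ring
      simp [hcα, hdiα]
  refine ⟨hiff, ?_⟩
  intro hiota φ P _ _ hint1 hint2
  have hc := hiff.mp hiota
  constructor
  · intro x i α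
    rw [hint1 x i α, (hc (secJ m N φ P x)).1 i α]
  · intro x α
    have : (∑ i : Fin m, fderiv ℝ P x (Pi.single i 1) i α)
        = ∑ i : Fin m, Γ2 (secJ m N φ P x) i α i :=
      Finset.sum_congr rfl fun i _ => hint2 x i i α
    rw [this, (hc (secJ m N φ P x)).2 α]
end
end

section
/- Hamilton–Jacobi theorem for the Hamilton–De Donder–Weyl equations (coordinate form). Let ρ(x,u) and γ^i_α(x,u) be smooth functions such that the m-form γ̄ = ρ d_mx + γ^i_α du^α∧(∂_i⌟d_mx) on E is closed, i.e. ∂ρ/∂u^α = Σ_i ∂γ^i_α/∂x^i and ∂γ^i_α/∂u^β = ∂γ^i_β/∂u^α for all indices. Assume the induced connection h^γ is flat, i.e. through every point (x₀,u₀) ∈ E there passes an integral section σ of h^γ with σ(x₀) = u₀. Then the following are equivalent: (1) for every integral section σ of h^γ, the map x ↦ (x, σ(x), γ^i_α(x,σ(x))) satisfies the Hamilton–De Donder–Weyl equations ∂σ^α/∂x^i = (∂H/∂p^i_α)∘(γ∘σ) and Σ_i ∂/∂x^i[γ^i_α(x,σ(x))] = −(∂H/∂u^α)∘(γ∘σ);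 (2) the m-form h∘γ = −H(x,u,γ(x,u)) d_mx + γ^i_α(x,u) du^α∧(∂_i⌟d_mx) on E is closed, which (given the symmetry ∂γ^i_α/∂u^β = ∂γ^i_β/∂u^α) amounts to Σ_i ∂γ^i_α/∂x^i + (∂H/∂u^α)(x,u,γ(x,u)) + (∂H/∂p^i_β)(x,u,γ(x,u))·∂γ^i_β/∂u^α = 0 for all (x,u). -/
open scoped BigOperators

noncomputable section

/-- The point `γ(x,u) = (x, u, γⁱ_α(x,u))` of `J¹π*` over `(x,u) ∈ E`. -/
def gSec (m N : ℕ) (γ : (Fin m → ℝ) × (Fin N → ℝ) → Fin m → Fin N → ℝ)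
    (e : (Fin m → ℝ) × (Fin N → ℝ)) : Jb m N := (e.1, e.2, γ e)

/-- `σ : ℝ^m → ℝ^N` is an integral section of the connection `h^γ` induced by the section
`γ` of `J¹π* → E`: `∂σ^α/∂xⁱ(x) = (∂H/∂pⁱ_α)(x, σ(x), γ(x,σ(x)))`. -/
def IsIntegralSec (m N : ℕ) (H : Jb m N → ℝ)
    (γ : (Fin m → ℝ) × (Fin N → ℝ) → Fin m → Fin N → ℝ)
    (σ : (Fin m → ℝ) → Fin N → ℝ) : Prop :=
  ∀ (x : Fin m → ℝ) (i : Fin m) (α : Fin N),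
    fderiv ℝ σ x (Pi.single i 1) α = fderiv ℝ H (gSec m N γ (x, σ x)) (PdirJ m N i α)

/-! Along an integral section `σ` the chain rule gives
`∑ᵢ ∂ᵢ[γⁱ_α(x,σ(x))] = ∑ᵢ ∂γⁱ_α/∂xⁱ + (∂σ^β/∂xⁱ)(∂γⁱ_α/∂u^β)`. Substituting
`∂σ^β/∂xⁱ = ∂H/∂pⁱ_β` and the symmetry `∂γⁱ_α/∂u^β = ∂γⁱ_β/∂u^α`, the second HDW equation at `x`
becomes the closedness condition of `h∘γ` at `(x, σ(x))`, while the first HDW equation is the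
integral-section condition itself. Flatness puts an integral section through every point of `E`,
so the condition along all integral sections is the condition everywhere. -/

theorem fderiv_comp_graph_apply_s12 {𝕜 E F G : Type*} [NontriviallyNormedField 𝕜]
    [NormedAddCommGroup E] [NormedSpace 𝕜 E] [NormedAddCommGroup F] [NormedSpace 𝕜 F]
    [NormedAddCommGroup G] [NormedSpace 𝕜 G] {g : E × F → G} {σ : E → F} {x : E}
    (hg : DifferentiableAt 𝕜 g (x, σ x)) (hσ : DifferentiableAt 𝕜 σ x) (v : E) :
    fderiv 𝕜 (fun y => g (y, σ y)) x v =
      fderiv 𝕜 g (x, σ x) (v, 0) + fderiv 𝕜 g (x, σ x) (0, fderiv 𝕜 σ x v) := by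
  have h : HasFDerivAt (fun y => g (y, σ y))
      ((fderiv 𝕜 g (x, σ x)).comp ((ContinuousLinearMap.id 𝕜 E).prod (fderiv 𝕜 σ x))) x :=
    hg.hasFDerivAt.comp x ((hasFDerivAt_id x).prodMk hσ.hasFDerivAt)
  rw [h.fderiv, ← map_add]
  simp

theorem ContinuousLinearMap.apply_zero_pi {R E M ι : Type*} [Semiring R] [TopologicalSpace R]
    [TopologicalSpace E] [AddCommMonoid E] [Module R E] [TopologicalSpace M] [AddCommMonoid M]
    [Module R M] [Fintype ι] [DecidableEq ι] (L : E × (ι → R) →L[R] M) (w : ι → R) :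
    L (0, w) = ∑ β, w β • L (0, Pi.single β 1) := by
  have hw : ((0 : E), w) = ∑ β, w β • ((0 : E), Pi.single β 1) := by
    ext <;> simp [Prod.fst_sum, Prod.snd_sum, Pi.single_apply]
  rw [hw, map_sum]
  simp only [map_smul]

namespace IsIntegralSec

variable {m N : ℕ} {H : Jb m N → ℝ} {γ : (Fin m → ℝ) × (Fin N → ℝ) → Fin m → Fin N → ℝ}
  {σ : (Fin m → ℝ) → Fin N → ℝ}

theorem sum_fderiv_comp_graph (hint : IsIntegralSec m N H γ σ) (hγ : Differentiable ℝ γ)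
    (hsymm : ∀ (e : (Fin m → ℝ) × (Fin N → ℝ)) (i : Fin m) (α β : Fin N),
      fderiv ℝ (fun y => γ y i α) e (0, Pi.single β 1) =
        fderiv ℝ (fun y => γ y i β) e (0, Pi.single α 1))
    (hσ : Differentiable ℝ σ) (x : Fin m → ℝ) (α : Fin N) :
    (∑ i : Fin m, fderiv ℝ (fun y => γ (y, σ y) i α) x (Pi.single i 1)) =
      (∑ i : Fin m, fderiv ℝ (fun y => γ y i α) (x, σ x) (Pi.single i 1, 0)) +
        ∑ i : Fin m, ∑ β : Fin N,
          fderiv ℝ H (gSec m N γ (x, σ x)) (PdirJ m N i β) *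
            fderiv ℝ (fun y => γ y i β) (x, σ x) (0, Pi.single α 1) := by
  rw [← Finset.sum_add_distrib]
  refine Finset.sum_congr rfl fun i _ => ?_
  have hγiα : DifferentiableAt ℝ (fun y => γ y i α) (x, σ x) := by fun_prop
  rw [fderiv_comp_graph_apply_s12 hγiα (hσ x), ContinuousLinearMap.apply_zero_pi]
  congr 1
  refine Finset.sum_congr rfl fun β _ => ?_
  rw [← hint x i β, hsymm, smul_eq_mul]

theorem sum_fderiv_comp_graph_eq_neg_iff (hint : IsIntegralSec m N H γ σ)
    (hγ : Differentiable ℝ γ)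
    (hsymm : ∀ (e : (Fin m → ℝ) × (Fin N → ℝ)) (i : Fin m) (α β : Fin N),
      fderiv ℝ (fun y => γ y i α) e (0, Pi.single β 1) =
        fderiv ℝ (fun y => γ y i β) e (0, Pi.single α 1))
    (hσ : Differentiable ℝ σ) (x : Fin m → ℝ) (α : Fin N) :
    (∑ i : Fin m, fderiv ℝ (fun y => γ (y, σ y) i α) x (Pi.single i 1)) =
        -(fderiv ℝ H (gSec m N γ (x, σ x)) (UdirJ m N α)) ↔
      (∑ i : Fin m, fderiv ℝ (fun y => γ y i α) (x, σ x) (Pi.single i 1, 0)) +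
        fderiv ℝ H (gSec m N γ (x, σ x)) (UdirJ m N α) +
        ∑ i : Fin m, ∑ β : Fin N,
          fderiv ℝ H (gSec m N γ (x, σ x)) (PdirJ m N i β) *
            fderiv ℝ (fun y => γ y i β) (x, σ x) (0, Pi.single α 1) = 0 := by
  rw [hint.sum_fderiv_comp_graph hγ hsymm hσ]
  constructor <;> intro h <;> linarith

end IsIntegralSec

theorem hamilton_jacobi_HDW_general (m N : ℕ)
    (H : Jb m N → ℝ)
    (γ : (Fin m → ℝ) × (Fin N → ℝ) → Fin m → Fin N → ℝ) (hγ : ContDiff ℝ (⊤ : ℕ∞) γ)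
    -- closedness of `γ̄`:  `∂γⁱ_α/∂u^β = ∂γⁱ_β/∂u^α`
    (hclosed₂ : ∀ (e : (Fin m → ℝ) × (Fin N → ℝ)) (i : Fin m) (α β : Fin N),
      fderiv ℝ (fun y => γ y i α) e (0, Pi.single β 1) =
        fderiv ℝ (fun y => γ y i β) e (0, Pi.single α 1))
    -- flatness of `h^γ`: an integral section passes through every point of `E`
    (hflat : ∀ (x₀ : Fin m → ℝ) (u₀ : Fin N → ℝ),
      ∃ σ : (Fin m → ℝ) → Fin N → ℝ,
        ContDiff ℝ (⊤ : ℕ∞) σ ∧ IsIntegralSec m N H γ σ ∧ σ x₀ = u₀) :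
    -- (1) every integral section of `h^γ` solves the HDW equations through `γ`
    (∀ σ : (Fin m → ℝ) → Fin N → ℝ, ContDiff ℝ (⊤ : ℕ∞) σ → IsIntegralSec m N H γ σ →
      (∀ (x : Fin m → ℝ) (i : Fin m) (α : Fin N),
        fderiv ℝ σ x (Pi.single i 1) α =
          fderiv ℝ H (gSec m N γ (x, σ x)) (PdirJ m N i α)) ∧
      (∀ (x : Fin m → ℝ) (α : Fin N),
        (∑ i : Fin m, fderiv ℝ (fun y => γ (y, σ y) i α) x (Pi.single i 1)) =
          -(fderiv ℝ H (gSec m N γ (x, σ x)) (UdirJ m N α)))) ↔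
    -- (2) the `m`-form `h∘γ` is closed
    (∀ (e : (Fin m → ℝ) × (Fin N → ℝ)) (α : Fin N),
      (∑ i : Fin m, fderiv ℝ (fun y => γ y i α) e (Pi.single i 1, 0)) +
        fderiv ℝ H (gSec m N γ e) (UdirJ m N α) +
        ∑ i : Fin m, ∑ β : Fin N,
          fderiv ℝ H (gSec m N γ e) (PdirJ m N i β) *
            fderiv ℝ (fun y => γ y i β) e (0, Pi.single α 1) = 0) := by
  have hγd : Differentiable ℝ γ := hγ.differentiable (by simp)
  constructor
  · rintro hHDW ⟨x₀, u₀⟩ α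
    obtain ⟨σ, hσ, hint, rfl⟩ := hflat x₀ u₀
    exact (hint.sum_fderiv_comp_graph_eq_neg_iff hγd hclosed₂
      (hσ.differentiable (by simp)) x₀ α).1 ((hHDW σ hσ hint).2 x₀ α)
  · intro hclosed σ hσ hint
    exact ⟨hint, fun x α => (hint.sum_fderiv_comp_graph_eq_neg_iff hγd hclosed₂
      (hσ.differentiable (by simp)) x α).2 (hclosed (x, σ x) α)⟩

/-- Hamilton–Jacobi theorem for the Hamilton–De Donder–Weyl equations, in coordinates.
Let `γ̄ = ρ d_mx + γⁱ_α du^α∧(∂_i⌟d_mx)` be a closed `m`-form on `E = ℝ^m × ℝ^N`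
(closedness expressed by the two coordinate conditions), and assume the induced connection
`h^γ` is flat (through every point of `E` passes an integral section).  Then:
(1) every integral section `σ` of `h^γ` gives a solution `x ↦ (x, σ(x), γ(x,σ(x)))` of the
HDW equations, if and only if
(2) the `m`-form `h∘γ` is closed, i.e.
`∑ᵢ ∂γⁱ_α/∂xⁱ + ∂H/∂u^α + (∂H/∂pⁱ_β)·∂γⁱ_β/∂u^α = 0` on `J¹π*`-points `(x,u,γ(x,u))`. -/
theorem hamilton_jacobi_HDW (m N : ℕ)
    (H : Jb m N → ℝ) (hH : ContDiff ℝ (⊤ : ℕ∞) H)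
    (ρ : (Fin m → ℝ) × (Fin N → ℝ) → ℝ) (hρ : ContDiff ℝ (⊤ : ℕ∞) ρ)
    (γ : (Fin m → ℝ) × (Fin N → ℝ) → Fin m → Fin N → ℝ) (hγ : ContDiff ℝ (⊤ : ℕ∞) γ)
    -- closedness of `γ̄`:  `∂ρ/∂u^α = ∑ᵢ ∂γⁱ_α/∂xⁱ`
    (hclosed₁ : ∀ (e : (Fin m → ℝ) × (Fin N → ℝ)) (α : Fin N),
      fderiv ℝ ρ e (0, Pi.single α 1) =
        ∑ i : Fin m, fderiv ℝ (fun y => γ y i α) e (Pi.single i 1, 0))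
    -- closedness of `γ̄`:  `∂γⁱ_α/∂u^β = ∂γⁱ_β/∂u^α`
    (hclosed₂ : ∀ (e : (Fin m → ℝ) × (Fin N → ℝ)) (i : Fin m) (α β : Fin N),
      fderiv ℝ (fun y => γ y i α) e (0, Pi.single β 1) =
        fderiv ℝ (fun y => γ y i β) e (0, Pi.single α 1))
    -- flatness of `h^γ`: an integral section passes through every point of `E`
    (hflat : ∀ (x₀ : Fin m → ℝ) (u₀ : Fin N → ℝ),
      ∃ σ : (Fin m → ℝ) → Fin N → ℝ,
        ContDiff ℝ (⊤ : ℕ∞) σ ∧ IsIntegralSec m N H γ σ ∧ σ x₀ = u₀) :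
    -- (1) every integral section of `h^γ` solves the HDW equations through `γ`
    (∀ σ : (Fin m → ℝ) → Fin N → ℝ, ContDiff ℝ (⊤ : ℕ∞) σ → IsIntegralSec m N H γ σ →
      (∀ (x : Fin m → ℝ) (i : Fin m) (α : Fin N),
        fderiv ℝ σ x (Pi.single i 1) α =
          fderiv ℝ H (gSec m N γ (x, σ x)) (PdirJ m N i α)) ∧
      (∀ (x : Fin m → ℝ) (α : Fin N),
        (∑ i : Fin m, fderiv ℝ (fun y => γ (y, σ y) i α) x (Pi.single i 1)) =
          -(fderiv ℝ H (gSec m N γ (x, σ x)) (UdirJ m N α)))) ↔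
    -- (2) the `m`-form `h∘γ` is closed
    (∀ (e : (Fin m → ℝ) × (Fin N → ℝ)) (α : Fin N),
      (∑ i : Fin m, fderiv ℝ (fun y => γ y i α) e (Pi.single i 1, 0)) +
        fderiv ℝ H (gSec m N γ e) (UdirJ m N α) +
        ∑ i : Fin m, ∑ β : Fin N,
          fderiv ℝ H (gSec m N γ e) (PdirJ m N i β) *
            fderiv ℝ (fun y => γ y i β) e (0, Pi.single α 1) = 0) :=
  hamilton_jacobi_HDW_general m N H γ hγ hclosed₂ hflat
end
end

section
/- Hamilton–Jacobi theorem for locally conformal Hamilton–De Donder–Weyl equations (coordinate form). Let ϑ = ϑ_i(x)dx^i be a closed 1-form on ℝ^m and let ρ(x,u), γ^i_α(x,u) be smooth functions such that the m-form γ̄ = ρ d_mx + γ^i_α du^α∧(∂_i⌟d_mx) on E is closed (∂ρ/∂u^α = Σ_i ∂γ^i_α/∂x^i and ∂γ^i_α/∂u^β = ∂γ^i_β/∂u^α). Assume the induced connection h^γ is flat, i.e. through every point (x₀,u₀) ∈ E there passes an integral section σ of h^γ with σ(x₀) = u₀. Then the following are equivalent: (1) for every integral section σ of h^γ, the map x ↦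 (x, σ(x), γ^i_α(x,σ(x))) satisfies the locally conformal Hamilton–De Donder–Weyl equations ∂σ^α/∂x^i = (∂H/∂p^i_α)∘(γ∘σ) and Σ_i ∂/∂x^i[γ^i_α(x,σ(x))] = −(∂H/∂u^α)∘(γ∘σ) + ϑ_i γ^i_α(x,σ(x)); (2) the m-form h∘γ on E is closed with respect to the Lichnerowicz differential, d_ϑ(h∘γ) = 0, which (given the symmetry of ∂γ^i_α/∂u^β) amounts to Σ_i ∂γ^i_α/∂x^i + (∂H/∂u^α)(x,u,γ(x,u)) + (∂H/∂p^i_β)(x,u,γ(x,u))·∂γ^i_β/∂u^α − ϑ_i γ^i_α = 0 for all (x,u). -/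
/-!
Along an integral section `σ` of `h^γ`, the chain rule and the symmetry `∂γⁱ_α/∂u^β = ∂γⁱ_β/∂u^α`
give `∑ᵢ ∂ᵢ[γⁱ_α(x,σ(x))] = ∑ᵢ ∂γⁱ_α/∂xⁱ + (∂H/∂pⁱ_β)·∂γⁱ_β/∂u^α` at `(x,σ(x))`, so the second
locally conformal HDW equation along `σ` is exactly the `d_ϑ`-closedness condition at the points
`(x,σ(x))`.  By flatness every point of `E` is of this form.
-/

open scoped BigOperators

noncomputable section

section ChainRule

variable {E G F : Type*} [NormedAddCommGroup E] [NormedSpace ℝ E] [NormedAddCommGroup G]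
  [NormedSpace ℝ G] [NormedAddCommGroup F] [NormedSpace ℝ F]

theorem fderiv_comp_prodMk_apply {f : E × G → F} {σ : E → G} {x : E}
    (hf : DifferentiableAt ℝ f (x, σ x)) (hσ : DifferentiableAt ℝ σ x) (v : E) :
    fderiv ℝ (fun y => f (y, σ y)) x v = fderiv ℝ f (x, σ x) (v, fderiv ℝ σ x v) :=
  DFunLike.congr_fun
    (hf.hasFDerivAt.comp x ((hasFDerivAt_id x).prodMk hσ.hasFDerivAt)).fderiv v

theorem ContinuousLinearMap.apply_prod_pi {ι : Type*} [Fintype ι] [DecidableEq ι]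
    (L : E × (ι → ℝ) →L[ℝ] F) (v : E) (w : ι → ℝ) :
    L (v, w) = L (v, 0) + ∑ β, w β • L (0, Pi.single β 1) := by
  have hw : (v, w) = (v, 0) + ∑ β, w β • ((0 : E), (Pi.single β 1 : ι → ℝ)) := by
    ext
    · simp [Prod.fst_sum]
    · simp [Prod.snd_sum, ← Pi.single_smul]
  simp only [hw, map_add, map_sum, map_smul]

end ChainRule

theorem IsIntegralSec.sum_fderiv_comp_graph_s13 {m N : ℕ} {H : Jb m N → ℝ}
    {γ : (Fin m → ℝ) × (Fin N → ℝ) → Fin m → Fin N → ℝ} (hγ : Differentiable ℝ γ)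
    (hsymm : ∀ (e : (Fin m → ℝ) × (Fin N → ℝ)) (i : Fin m) (α β : Fin N),
      fderiv ℝ (fun y => γ y i α) e (0, Pi.single β 1) =
        fderiv ℝ (fun y => γ y i β) e (0, Pi.single α 1))
    {σ : (Fin m → ℝ) → Fin N → ℝ} (hσ : Differentiable ℝ σ) (hint : IsIntegralSec m N H γ σ)
    (x : Fin m → ℝ) (α : Fin N) :
    ∑ i : Fin m, fderiv ℝ (fun y => γ (y, σ y) i α) x (Pi.single i 1) =
      (∑ i : Fin m, fderiv ℝ (fun y => γ y i α) (x, σ x) (Pi.single i 1, 0)) +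
        ∑ i : Fin m, ∑ β : Fin N,
          fderiv ℝ H (gSec m N γ (x, σ x)) (PdirJ m N i β) *
            fderiv ℝ (fun y => γ y i β) (x, σ x) (0, Pi.single α 1) := by
  rw [← Finset.sum_add_distrib]
  refine Finset.sum_congr rfl fun i _ => ?_
  have hγiα : Differentiable ℝ (fun y => γ y i α) := by fun_prop
  rw [fderiv_comp_prodMk_apply (hγiα _) (hσ x), ContinuousLinearMap.apply_prod_pi]
  simp only [hint x i, hsymm (x, σ x) i α, smul_eq_mul]

theorem hamilton_jacobi_lcHDW_general (m N : ℕ)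
    (H : Jb m N → ℝ)
    (ϑ : (Fin m → ℝ) → Fin m → ℝ)
    (γ : (Fin m → ℝ) × (Fin N → ℝ) → Fin m → Fin N → ℝ) (hγ : ContDiff ℝ (⊤ : ℕ∞) γ)
    -- closedness of `γ̄`:  `∂γⁱ_α/∂u^β = ∂γⁱ_β/∂u^α`
    (hclosed₂ : ∀ (e : (Fin m → ℝ) × (Fin N → ℝ)) (i : Fin m) (α β : Fin N),
      fderiv ℝ (fun y => γ y i α) e (0, Pi.single β 1) =
        fderiv ℝ (fun y => γ y i β) e (0, Pi.single α 1))
    -- flatness of `h^γ`: an integral section passes through every point of `E`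
    (hflat : ∀ (x₀ : Fin m → ℝ) (u₀ : Fin N → ℝ),
      ∃ σ : (Fin m → ℝ) → Fin N → ℝ,
        ContDiff ℝ (⊤ : ℕ∞) σ ∧ IsIntegralSec m N H γ σ ∧ σ x₀ = u₀) :
    -- (1) every integral section of `h^γ` solves the locally conformal HDW equations
    (∀ σ : (Fin m → ℝ) → Fin N → ℝ, ContDiff ℝ (⊤ : ℕ∞) σ → IsIntegralSec m N H γ σ →
      (∀ (x : Fin m → ℝ) (i : Fin m) (α : Fin N),
        fderiv ℝ σ x (Pi.single i 1) α =
          fderiv ℝ H (gSec m N γ (x, σ x)) (PdirJ m N i α)) ∧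
      (∀ (x : Fin m → ℝ) (α : Fin N),
        (∑ i : Fin m, fderiv ℝ (fun y => γ (y, σ y) i α) x (Pi.single i 1)) =
          -(fderiv ℝ H (gSec m N γ (x, σ x)) (UdirJ m N α)) +
            ∑ i : Fin m, ϑ x i * γ (x, σ x) i α)) ↔
    -- (2) `d_ϑ(h∘γ) = 0`
    (∀ (e : (Fin m → ℝ) × (Fin N → ℝ)) (α : Fin N),
      (∑ i : Fin m, fderiv ℝ (fun y => γ y i α) e (Pi.single i 1, 0)) +
        fderiv ℝ H (gSec m N γ e) (UdirJ m N α) +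
        (∑ i : Fin m, ∑ β : Fin N,
          fderiv ℝ H (gSec m N γ e) (PdirJ m N i β) *
            fderiv ℝ (fun y => γ y i β) e (0, Pi.single α 1)) -
        (∑ i : Fin m, ϑ e.1 i * γ e i α) = 0) := by
  have hγd : Differentiable ℝ γ := hγ.differentiable (by simp)
  have divergence {σ} (hσ : ContDiff ℝ (⊤ : ℕ∞) σ) (hint : IsIntegralSec m N H γ σ) :=
    hint.sum_fderiv_comp_graph_s13 hγd hclosed₂ (hσ.differentiable (by simp))
  constructor
  · intro hHDW e α
    obtain ⟨σ, hσ, hint, hσx⟩ := hflat e.1 e.2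
    have hdiv := divergence hσ hint e.1 α
    have hsecond := (hHDW σ hσ hint).2 e.1 α
    rw [hσx, Prod.mk.eta] at hdiv hsecond
    linarith
  · intro hclosed σ hσ hint
    refine ⟨hint, fun x α => ?_⟩
    linarith [divergence hσ hint x α, hclosed (x, σ x) α]

/-- Hamilton–Jacobi theorem for the locally conformal Hamilton–De Donder–Weyl equations,
in coordinates.  Let `ϑ = ϑ_i(x)dxⁱ` be a closed 1-form on `ℝ^m` and
`γ̄ = ρ d_mx + γⁱ_α du^α∧(∂_i⌟d_mx)` a closed `m`-form on `E = ℝ^m × ℝ^N`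
(closedness expressed in coordinates), with the induced connection `h^γ` flat.  Then:
(1) every integral section `σ` of `h^γ` gives a solution `x ↦ (x, σ(x), γ(x,σ(x)))` of the
locally conformal HDW equations, if and only if
(2) `h∘γ` is closed for the Lichnerowicz differential `d_ϑ`, i.e.
`∑ᵢ ∂γⁱ_α/∂xⁱ + ∂H/∂u^α + (∂H/∂pⁱ_β)·∂γⁱ_β/∂u^α − ϑ_i γⁱ_α = 0` for all `(x,u)`. -/
theorem hamilton_jacobi_lcHDW (m N : ℕ)
    (H : Jb m N → ℝ) (hH : ContDiff ℝ (⊤ : ℕ∞) H)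
    (ϑ : (Fin m → ℝ) → Fin m → ℝ) (hϑ : ContDiff ℝ (⊤ : ℕ∞) ϑ)
    -- `ϑ` is closed
    (hϑclosed : ∀ (x : Fin m → ℝ) (i j : Fin m),
      fderiv ℝ (fun y => ϑ y i) x (Pi.single j 1) =
        fderiv ℝ (fun y => ϑ y j) x (Pi.single i 1))
    (ρ : (Fin m → ℝ) × (Fin N → ℝ) → ℝ) (hρ : ContDiff ℝ (⊤ : ℕ∞) ρ)
    (γ : (Fin m → ℝ) × (Fin N → ℝ) → Fin m → Fin N → ℝ) (hγ : ContDiff ℝ (⊤ : ℕ∞) γ)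
    -- closedness of `γ̄`:  `∂ρ/∂u^α = ∑ᵢ ∂γⁱ_α/∂xⁱ`
    (hclosed₁ : ∀ (e : (Fin m → ℝ) × (Fin N → ℝ)) (α : Fin N),
      fderiv ℝ ρ e (0, Pi.single α 1) =
        ∑ i : Fin m, fderiv ℝ (fun y => γ y i α) e (Pi.single i 1, 0))
    -- closedness of `γ̄`:  `∂γⁱ_α/∂u^β = ∂γⁱ_β/∂u^α`
    (hclosed₂ : ∀ (e : (Fin m → ℝ) × (Fin N → ℝ)) (i : Fin m) (α β : Fin N),
      fderiv ℝ (fun y => γ y i α) e (0, Pi.single β 1) =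
        fderiv ℝ (fun y => γ y i β) e (0, Pi.single α 1))
    -- flatness of `h^γ`: an integral section passes through every point of `E`
    (hflat : ∀ (x₀ : Fin m → ℝ) (u₀ : Fin N → ℝ),
      ∃ σ : (Fin m → ℝ) → Fin N → ℝ,
        ContDiff ℝ (⊤ : ℕ∞) σ ∧ IsIntegralSec m N H γ σ ∧ σ x₀ = u₀) :
    -- (1) every integral section of `h^γ` solves the locally conformal HDW equations
    (∀ σ : (Fin m → ℝ) → Fin N → ℝ, ContDiff ℝ (⊤ : ℕ∞) σ → IsIntegralSec m N H γ σ →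
      (∀ (x : Fin m → ℝ) (i : Fin m) (α : Fin N),
        fderiv ℝ σ x (Pi.single i 1) α =
          fderiv ℝ H (gSec m N γ (x, σ x)) (PdirJ m N i α)) ∧
      (∀ (x : Fin m → ℝ) (α : Fin N),
        (∑ i : Fin m, fderiv ℝ (fun y => γ (y, σ y) i α) x (Pi.single i 1)) =
          -(fderiv ℝ H (gSec m N γ (x, σ x)) (UdirJ m N α)) +
            ∑ i : Fin m, ϑ x i * γ (x, σ x) i α)) ↔
    -- (2) `d_ϑ(h∘γ) = 0`
    (∀ (e : (Fin m → ℝ) × (Fin N → ℝ)) (α : Fin N),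
      (∑ i : Fin m, fderiv ℝ (fun y => γ y i α) e (Pi.single i 1, 0)) +
        fderiv ℝ H (gSec m N γ e) (UdirJ m N α) +
        (∑ i : Fin m, ∑ β : Fin N,
          fderiv ℝ H (gSec m N γ e) (PdirJ m N i β) *
            fderiv ℝ (fun y => γ y i β) e (0, Pi.single α 1)) -
        (∑ i : Fin m, ϑ e.1 i * γ e i α) = 0) :=
  hamilton_jacobi_lcHDW_general m N H ϑ γ hγ hclosed₂ hflat
end
end
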